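/- arXiv:2504.12155 — 10 statements merged into one kernel-verified Lean document; each statement's English description precedes it below -/
import Mathlib

section
/- Let S be a ring and let P_1, ..., P_k be completely prime two-sided ideals of S. If every non-invertible element of S lies in P_1 ∪ ... ∪ P_k, then every proper right ideal of S is contained in one of the ideals P_1, ..., P_k. -/
/-- A set `P` in a ring `S` is a completely prime two-sided ideal if it is a proper
two-sided ideal such that `x * y ∈ P` implies `x ∈ P` or `y ∈ P`. -/
def IsCompletelyPrimeIdealSet {S : Type*} [Ring S] (P : Set S) : Prop :=
  (0 : S) ∈ P ∧ (∀ x ∈ P, ∀ y ∈ P, x + y ∈ P) ∧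
  (∀ x ∈ P, ∀ s : S, s * x ∈ P) ∧ (∀ x ∈ P, ∀ s : S, x * s ∈ P) ∧
  P ≠ Set.univ ∧ ∀ x y : S, x * y ∈ P → x ∈ P ∨ y ∈ P

/-- A set `I` in a ring `S` is a right ideal if it contains `0` and is closed under
addition and under right multiplication by arbitrary ring elements. -/
def IsRightIdealSet {S : Type*} [Ring S] (I : Set S) : Prop :=
  (0 : S) ∈ I ∧ (∀ x ∈ I, ∀ y ∈ I, x + y ∈ I) ∧ ∀ x ∈ I, ∀ s : S, x * s ∈ I

/-!
Prime avoidance for completely prime ideals. Take a cover `I ⊆ P₁ ∪ ⋯ ∪ Pₙ` with `n` minimal and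
`n ≥ 2`, so that there are `xᵢ ∈ I` lying in `Pᵢ` only. The product `z = x₂ ⋯ xₙ` lies in `I`
(right ideal) and in `P₂, …, Pₙ` (two-sided ideals) but not in `P₁` (completely prime). Then
`x₁ + z ∈ I` lies in no `Pᵢ`. Proper right ideals consist of non-units, so the theorem follows.
-/

section PrimeAvoidance

variable {S : Type*} [Ring S]

theorem IsCompletelyPrimeIdealSet.mem_of_mem_of_add_mem {P : Set S}
    (hP : IsCompletelyPrimeIdealSet P) {x y : S} (hx : x ∈ P) (hxy : x + y ∈ P) : y ∈ P := by
  obtain ⟨-, hadd, -, hmul, -⟩ := hP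
  simpa using hadd _ hxy _ (hmul x hx (-1))

theorem IsRightIdealSet.not_isUnit_of_mem {I : Set S} (hI : IsRightIdealSet I)
    (hproper : I ≠ Set.univ) {x : S} (hx : x ∈ I) : ¬IsUnit x := by
  obtain ⟨-, -, hmul⟩ := hI
  rintro ⟨u, rfl⟩
  have hone : (1 : S) ∈ I := by simpa using hmul _ hx ↑u⁻¹
  exact hproper (Set.eq_univ_of_forall fun s => by simpa using hmul 1 hone s)

theorem IsRightIdealSet.exists_mem_not_mem_forall_mem {ι : Type*} {P : ι → Set S}
    (hP : ∀ i, IsCompletelyPrimeIdealSet (P i)) {Q : Set S} (hQ : IsCompletelyPrimeIdealSet Q)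
    {I : Set S} (hI : IsRightIdealSet I) {T : Finset ι} (hT : T.Nonempty)
    (ha : ∀ j ∈ T, ∃ a ∈ I, a ∈ P j ∧ a ∉ Q) : ∃ z ∈ I, z ∉ Q ∧ ∀ j ∈ T, z ∈ P j := by
  induction hT using Finset.Nonempty.cons_induction with
  | singleton j =>
    obtain ⟨a, haI, haP, haQ⟩ := ha j (Finset.mem_singleton_self j)
    exact ⟨a, haI, haQ, fun i hi => Finset.mem_singleton.1 hi ▸ haP⟩
  | cons j T hj hT ih =>
    obtain ⟨z, hzI, hzQ, hzP⟩ := ih fun i hi => ha i (Finset.mem_cons_of_mem hi)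
    obtain ⟨a, haI, haP, haQ⟩ := ha j (Finset.mem_cons_self j T)
    refine ⟨z * a, hI.2.2 z hzI a, fun hza => (hQ.2.2.2.2.2 z a hza).elim hzQ haQ, ?_⟩
    intro i hi
    rcases Finset.mem_cons.1 hi with rfl | hi
    · exact (hP i).2.2.1 a haP z
    · exact (hP i).2.2.2.1 z (hzP i hi) a

theorem IsRightIdealSet.not_subset_biUnion_of_forall_mem_not_mem {ι : Type*} [DecidableEq ι]
    {P : ι → Set S} (hP : ∀ i, IsCompletelyPrimeIdealSet (P i)) {I : Set S}
    (hI : IsRightIdealSet I) {T : Finset ι} {i₀ : ι} (hi₀ : i₀ ∈ T)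
    (hT : (T.erase i₀).Nonempty) (x : ι → S) (hxI : ∀ i ∈ T, x i ∈ I)
    (hx : ∀ i ∈ T, ∀ j ∈ T.erase i, x i ∉ P j) :
    ¬I ⊆ ⋃ i ∈ T, P i := by
  intro hcov
  have hxP : ∀ i ∈ T, x i ∈ P i := fun i hi => by
    obtain ⟨j, hj, hxj⟩ := Set.mem_iUnion₂.1 (hcov (hxI i hi))
    by_contra hxi
    exact hx i hi j (Finset.mem_erase.2 ⟨fun hji => hxi (hji ▸ hxj), hj⟩) hxj
  have hsep : ∀ j ∈ T.erase i₀, ∃ a ∈ I, a ∈ P j ∧ a ∉ P i₀ := fun j hj =>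
    have hjT := Finset.mem_of_mem_erase hj
    ⟨x j, hxI j hjT, hxP j hjT,
      hx j hjT i₀ (Finset.mem_erase.2 ⟨(Finset.ne_of_mem_erase hj).symm, hi₀⟩)⟩
  obtain ⟨z, hzI, hzP₀, hzP⟩ := hI.exists_mem_not_mem_forall_mem hP (hP i₀) hT hsep
  obtain ⟨j, hj, hyP⟩ := Set.mem_iUnion₂.1 (hcov (hI.2.1 _ (hxI i₀ hi₀) _ hzI))
  by_cases hji : j = i₀
  · subst hji
    exact hzP₀ ((hP j).mem_of_mem_of_add_mem (hxP j hj) hyP)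
  · have hjT : j ∈ T.erase i₀ := Finset.mem_erase.2 ⟨hji, hj⟩
    rw [add_comm] at hyP
    exact hx i₀ hi₀ j hjT ((hP j).mem_of_mem_of_add_mem (hzP j hjT) hyP)

theorem IsRightIdealSet.exists_subset_of_subset_biUnion {ι : Type*} [DecidableEq ι]
    {P : ι → Set S} (hP : ∀ i, IsCompletelyPrimeIdealSet (P i)) {I : Set S}
    (hI : IsRightIdealSet I) (T : Finset ι) (hcov : I ⊆ ⋃ i ∈ T, P i) : ∃ i ∈ T, I ⊆ P i := by
  induction T using Finset.strongInduction with
  | H T ih =>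
    by_cases hred : ∃ i ∈ T, I ⊆ ⋃ j ∈ T.erase i, P j
    · obtain ⟨i, hi, hcov'⟩ := hred
      obtain ⟨j, hj, hsub⟩ := ih _ (Finset.erase_ssubset hi) hcov'
      exact ⟨j, Finset.mem_of_mem_erase hj, hsub⟩
    simp only [not_exists, not_and, Set.not_subset, Set.mem_iUnion₂] at hred
    choose! x hxI hx using hred
    obtain ⟨i₀, hi₀, -⟩ := Set.mem_iUnion₂.1 (hcov hI.1)
    rcases (T.erase i₀).eq_empty_or_nonempty with hT | hT
    · rw [← Finset.insert_erase hi₀, hT] at hcov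
      exact ⟨i₀, hi₀, by simpa using hcov⟩
    · exact (hI.not_subset_biUnion_of_forall_mem_not_mem hP hi₀ hT x hxI hx hcov).elim

end PrimeAvoidance

/-- If every non-invertible element of a ring `S` lies in the union of finitely many
completely prime two-sided ideals `P 1, ..., P k`, then every proper right ideal of `S`
is contained in one of the `P i`. -/
theorem every_proper_right_ideal_le_of_nonunits_subset_union
    {S : Type*} [Ring S] {k : ℕ} (P : Fin k → Set S)
    (hP : ∀ i, IsCompletelyPrimeIdealSet (P i))
    (hcover : ∀ x : S, ¬IsUnit x → ∃ i, x ∈ P i)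
    (I : Set S) (hI : IsRightIdealSet I) (hproper : I ≠ Set.univ) :
    ∃ i, I ⊆ P i := by
  have hcov : I ⊆ ⋃ i ∈ Finset.univ, P i := fun x hx => by
    obtain ⟨i, hi⟩ := hcover x (hI.not_isUnit_of_mem hproper hx)
    exact Set.mem_iUnion₂.2 ⟨i, Finset.mem_univ i, hi⟩
  obtain ⟨i, -, hi⟩ := hI.exists_subset_of_subset_biUnion hP Finset.univ hcov
  exact ⟨i, hi⟩
end

section
/- Let U be a non-zero uniserial right R-module. Then the set I_U of non-injective endomorphisms of U and the set K_U of non-surjective endomorphisms of U are both two-sided completely prime ideals of End(U). -/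
/-- A module is uniserial if its lattice of submodules is linearly ordered by inclusion. -/
def IsUniserialModule (R M : Type*) [Ring R] [AddCommGroup M] [Module R M] : Prop :=
  ∀ A B : Submodule R M, A ≤ B ∨ B ≤ A

/-- For a non-zero uniserial module `U`, the set `I_U` of non-injective endomorphisms and
the set `K_U` of non-surjective endomorphisms are two-sided completely prime ideals of
`End(U)`. -/
theorem uniserial_noninjective_and_nonsurjective_completelyPrime
    {R U : Type*} [Ring R] [AddCommGroup U] [Module R U]
    [Nontrivial U] (huni : IsUniserialModule R U) :
    IsCompletelyPrimeIdealSet {f : Module.End R U | ¬Function.Injective f} ∧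
    IsCompletelyPrimeIdealSet {f : Module.End R U | ¬Function.Surjective f} := by
  have hker : ∀ f : Module.End R U,
      ¬Function.Injective f ↔ LinearMap.ker f ≠ ⊥ := by
    intro f
    rw [ne_eq, LinearMap.ker_eq_bot]
  have hrange : ∀ f : Module.End R U,
      ¬Function.Surjective f ↔ LinearMap.range f ≠ ⊤ := by
    intro f
    rw [ne_eq, LinearMap.range_eq_top]
  obtain ⟨u, hu⟩ := exists_ne (0 : U)
  constructor
  · refine ⟨?_, ?_, ?_, ?_, ?_, ?_⟩
    · simp only [Set.mem_setOf_eq, hker]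
      rw [LinearMap.ker_zero]
      exact top_ne_bot
    · intro f hf g hg
      simp only [Set.mem_setOf_eq, hker] at *
      rcases huni (LinearMap.ker f) (LinearMap.ker g) with h | h
      · intro hfg
        apply hf
        rw [← le_bot_iff, ← hfg]
        intro x hx
        have hxg := h hx
        simp only [LinearMap.mem_ker] at *
        rw [LinearMap.add_apply, hx, hxg, add_zero]
      · intro hfg
        apply hg
        rw [← le_bot_iff, ← hfg]
        intro x hx
        have hxf := h hx
        simp only [LinearMap.mem_ker] at *
        rw [LinearMap.add_apply, hx, hxf, add_zero]
    · intro f hf s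
      simp only [Set.mem_setOf_eq, hker] at *
      intro h
      apply hf
      rw [← le_bot_iff, ← h]
      intro x hx
      simp only [LinearMap.mem_ker] at *
      rw [Module.End.mul_apply, hx, map_zero]
    · intro f hf s
      simp only [Set.mem_setOf_eq, hker] at *
      rcases huni (LinearMap.ker f) (LinearMap.range s) with h | h
      · -- ker f ≤ range s
        obtain ⟨y, hy, hy0⟩ := Submodule.exists_mem_ne_zero_of_ne_bot hf
        obtain ⟨x, hx⟩ := h hy
        intro hc
        have hx0 : x ≠ 0 := by
          intro hx0
          apply hy0
          rw [← hx, hx0, map_zero]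
        apply hx0
        have : (f * s) x = 0 := by
          rw [Module.End.mul_apply, hx]
          exact hy
        rw [← LinearMap.mem_ker, hc, Submodule.mem_bot] at this
        exact this
      · -- range s ≤ ker f : f * s = 0
        intro hc
        apply hu
        have : u ∈ LinearMap.ker (f * s) := by
          rw [LinearMap.mem_ker, Module.End.mul_apply]
          exact h (LinearMap.mem_range_self s u)
        rw [hc, Submodule.mem_bot] at this
        exact this
    · intro hc
      have : (1 : Module.End R U) ∈ {f : Module.End R U | ¬Function.Injective f} := by
        rw [hc]; trivial
      exact this (fun a b hab => hab)
    · intro f g hfg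
      by_contra h
      push_neg at h
      simp only [Set.mem_setOf_eq, not_not] at h hfg
      exact hfg (h.1.comp h.2)
  · refine ⟨?_, ?_, ?_, ?_, ?_, ?_⟩
    · simp only [Set.mem_setOf_eq]
      intro h
      obtain ⟨x, hx⟩ := h u
      apply hu
      rw [← hx]; rfl
    · intro f hf g hg
      simp only [Set.mem_setOf_eq, hrange] at *
      rcases huni (LinearMap.range f) (LinearMap.range g) with h | h
      · intro hfg
        apply hg
        rw [← top_le_iff, ← hfg]
        rintro x ⟨y, rfl⟩
        have : (f + g) y = f y + g y := rfl
        rw [this]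
        exact add_mem (h (LinearMap.mem_range_self f y)) (LinearMap.mem_range_self g y)
      · intro hfg
        apply hf
        rw [← top_le_iff, ← hfg]
        rintro x ⟨y, rfl⟩
        have : (f + g) y = f y + g y := rfl
        rw [this]
        exact add_mem (LinearMap.mem_range_self f y) (h (LinearMap.mem_range_self g y))
    · intro f hf s
      simp only [Set.mem_setOf_eq, hrange] at *
      rcases huni (LinearMap.range f) (LinearMap.ker s) with h | h
      · -- s * f = 0
        intro hc
        apply hu
        have : u ∈ LinearMap.range (s * f) := by rw [hc]; trivial
        obtain ⟨x, hx⟩ := this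
        have h0 : s (f x) = 0 := h (LinearMap.mem_range_self f x)
        rw [← hx, Module.End.mul_apply, h0]
      · -- ker s ≤ range f
        intro hc
        apply hf
        rw [← top_le_iff]
        intro y _
        have : s y ∈ LinearMap.range (s * f) := by rw [hc]; trivial
        obtain ⟨x, hx⟩ := this
        have : y - f x ∈ LinearMap.ker s := by
          rw [LinearMap.mem_ker, map_sub, ← Module.End.mul_apply, hx, sub_self]
        obtain ⟨z, hz⟩ := h this
        exact ⟨x + z, by rw [map_add, hz, add_sub_cancel]⟩
    · intro f hf s
      simp only [Set.mem_setOf_eq, hrange] at *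
      intro hc
      apply hf
      rw [← top_le_iff, ← hc]
      rintro x ⟨y, rfl⟩
      exact ⟨s y, rfl⟩
    · intro hc
      have : (1 : Module.End R U) ∈ {f : Module.End R U | ¬Function.Surjective f} := by
        rw [hc]; trivial
      exact this (fun a => ⟨a, rfl⟩)
    · intro f g hfg
      by_contra h
      push_neg at h
      simp only [Set.mem_setOf_eq, not_not] at h hfg
      exact hfg (h.1.comp h.2)
end

section
/- Let U be a non-zero uniserial right R-module, let I_U be the ideal of non-injective endomorphisms and K_U the ideal of non-surjective endomorphisms of End(U). Then every endomorphism of U not in I_U ∪ K_U is an automorphism; consequently every proper right ideal of End(U) is contained in I_U or in K_U. -/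
/-- For a non-zero uniserial module `U`, every endomorphism outside
`I_U ∪ K_U` (the sets of non-injective and non-surjective endomorphisms) is an
automorphism, and consequently every proper right ideal of `End(U)` is contained in
`I_U` or in `K_U`. -/
theorem uniserial_unit_of_injective_surjective_and_right_ideals
    {R U : Type*} [Ring R] [AddCommGroup U] [Module R U]
    [Nontrivial U] (huni : IsUniserialModule R U) :
    (∀ f : Module.End R U,
      f ∉ {f : Module.End R U | ¬Function.Injective f} ∪
          {f : Module.End R U | ¬Function.Surjective f} → IsUnit f) ∧
    (∀ I : Set (Module.End R U), IsRightIdealSet I → I ≠ Set.univ →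
      I ⊆ {f : Module.End R U | ¬Function.Injective f} ∨
      I ⊆ {f : Module.End R U | ¬Function.Surjective f}) := by
  have isUnit_of : ∀ f : Module.End R U,
      Function.Injective f → Function.Surjective f → IsUnit f := by
    intro f hi hs
    exact (Module.End.isUnit_iff f).mpr ⟨hi, hs⟩
  constructor
  · intro f hf
    simp only [Set.mem_union, Set.mem_setOf_eq, not_or, not_not] at hf
    exact isUnit_of f hf.1 hf.2
  · intro I hI hne
    by_contra hc
    push_neg at hc
    obtain ⟨hc1, hc2⟩ := hc
    obtain ⟨g, hgI, hg⟩ := Set.not_subset.mp hc1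
    obtain ⟨h, hhI, hh⟩ := Set.not_subset.mp hc2
    simp only [Set.mem_setOf_eq, not_not] at hg hh
    -- hg : Function.Injective g, hh : Function.Surjective h
    have key : ∃ f ∈ I, Function.Injective f ∧ Function.Surjective f := by
      by_cases hgs : Function.Surjective (g : U →ₗ[R] U)
      · exact ⟨g, hgI, hg, hgs⟩
      by_cases hhi : Function.Injective (h : U →ₗ[R] U)
      · exact ⟨h, hhI, hhi, hh⟩
      refine ⟨g + h, hI.2.1 g hgI h hhI, ?_, ?_⟩
      · -- injectivity of g + h
        rw [← LinearMap.ker_eq_bot]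
        rcases huni (LinearMap.ker (g + h)) (LinearMap.ker h) with hle | hle
        · rw [eq_bot_iff]
          intro x hx
          have hhx : h x = 0 := hle hx
          have hgx : g x = 0 := by
            have h0 : g x + h x = 0 := LinearMap.mem_ker.mp hx
            simpa [hhx] using h0
          have : x = 0 := hg (by simpa using hgx)
          simpa [this]
        · exact absurd (by
            rw [← LinearMap.ker_eq_bot, eq_bot_iff]
            intro x hx
            have h0 : g x + h x = 0 := LinearMap.mem_ker.mp (hle hx)
            have hhx : h x = 0 := LinearMap.mem_ker.mp hx
            have hgx : g x = 0 := by simpa [hhx] using h0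
            have : x = 0 := hg (by simpa using hgx)
            simpa [this]) hhi
      · -- surjectivity of g + h
        rw [← LinearMap.range_eq_top]
        rcases huni (LinearMap.range (g + h)) (LinearMap.range g) with hle | hle
        · exact absurd (by
            rw [← LinearMap.range_eq_top, eq_top_iff]
            intro u _
            obtain ⟨x, hx⟩ := hh u
            have h1 : (g + h) x ∈ LinearMap.range g := hle ⟨x, rfl⟩
            have h2 : g x ∈ LinearMap.range g := ⟨x, rfl⟩
            have h3 : (g + h) x - g x ∈ LinearMap.range g :=
              Submodule.sub_mem _ h1 h2
            have : (g + h) x - g x = u := by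
              simp [LinearMap.add_apply, hx]
            rwa [this] at h3) hgs
        · rw [eq_top_iff]
          intro u _
          obtain ⟨x, hx⟩ := hh u
          have h1 : (g + h) x ∈ LinearMap.range (g + h) := ⟨x, rfl⟩
          have h2 : g x ∈ LinearMap.range (g + h) := hle ⟨x, rfl⟩
          have h3 : (g + h) x - g x ∈ LinearMap.range (g + h) :=
            Submodule.sub_mem _ h1 h2
          have : (g + h) x - g x = u := by
            simp [LinearMap.add_apply, hx]
          rwa [this] at h3
    obtain ⟨f, hfI, hfi, hfs⟩ := key
    obtain ⟨v, hv⟩ := isUnit_of f hfi hfs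
    have h1 : (1 : Module.End R U) ∈ I := by
      have := hI.2.2 f hfI (↑v⁻¹)
      rwa [show f * (↑v⁻¹ : Module.End R U) = 1 by
        rw [← hv]; exact v.mul_inv] at this
    apply hne
    ext y
    simp only [Set.mem_univ, iff_true]
    have := hI.2.2 1 h1 y
    rwa [one_mul] at this
end

section
/- Let U be a non-zero uniserial right R-module with I_U ⊆ K_U (every non-injective endomorphism is non-surjective). Then End(U) is a local ring with maximal ideal K_U. -/
/-- If `U` is a non-zero uniserial module in which every non-injective endomorphism is
non-surjective (`I_U ⊆ K_U`), then `End(U)` is a local ring whose maximal ideal is `K_U`,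
the set of non-surjective endomorphisms (i.e. `K_U` is exactly the set of non-units). -/
theorem uniserial_isLocalRing_of_noninjective_subset_nonsurjective
    {R U : Type*} [Ring R] [AddCommGroup U] [Module R U]
    [Nontrivial U] (huni : IsUniserialModule R U)
    (hIK : {f : Module.End R U | ¬Function.Injective f} ⊆
           {f : Module.End R U | ¬Function.Surjective f}) :
    IsLocalRing (Module.End R U) ∧
      ∀ f : Module.End R U, ¬Function.Surjective f ↔ ¬IsUnit f := by
  have key : ∀ f : Module.End R U, ¬Function.Surjective f ↔ ¬IsUnit f := by
    intro f
    constructor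
    · intro hns hu
      exact hns (Module.End.isUnit_iff f |>.mp hu).2
    · intro hnu hs
      have hinj : Function.Injective f := by
        by_contra h
        exact hIK h hs
      exact hnu ((Module.End.isUnit_iff f).mpr ⟨hinj, hs⟩)
  haveI : Nontrivial (Module.End R U) := by
    obtain ⟨x, hx⟩ := exists_ne (0 : U)
    exact ⟨1, 0, fun h => hx (by simpa using LinearMap.congr_fun h x)⟩
  refine ⟨?_, key⟩
  constructor
  intro f g hfg
  by_contra h
  push_neg at h
  obtain ⟨h1, h2⟩ := h
  have hg : g = 1 - f := by rw [eq_sub_iff_add_eq, add_comm]; exact hfg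
  subst hg
  have hs1 : ¬Function.Surjective f := (key f).mpr h1
  have hs2 : ¬Function.Surjective ⇑(1 - f : Module.End R U) := (key (1 - f)).mpr h2
  have hr1 : LinearMap.range f < ⊤ := lt_top_iff_ne_top.mpr
    (fun ht => hs1 (LinearMap.range_eq_top.mp ht))
  have hr2 : LinearMap.range (1 - f) < ⊤ := lt_top_iff_ne_top.mpr
    (fun ht => hs2 (LinearMap.range_eq_top.mp ht))
  have hsum : ∀ x : U, x ∈ LinearMap.range f ⊔ LinearMap.range (1 - f) := by
    intro x
    have : x = f x + (1 - f) x := by simp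
    rw [this]
    exact Submodule.add_mem_sup (LinearMap.mem_range_self f x)
      (LinearMap.mem_range_self (1 - f) x)
  rcases huni (LinearMap.range f) (LinearMap.range (1 - f)) with hle | hle
  · have : LinearMap.range f ⊔ LinearMap.range (1 - f) = LinearMap.range (1 - f) :=
      sup_eq_right.mpr hle
    exact absurd (top_le_iff.mp (fun x _ => this ▸ hsum x)) hr2.ne
  · have : LinearMap.range f ⊔ LinearMap.range (1 - f) = LinearMap.range f :=
      sup_eq_left.mpr hle
    exact absurd (top_le_iff.mp (fun x _ => this ▸ hsum x)) hr1.ne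
end

section
/- Let U be a non-zero uniserial right R-module such that I_U ⊄ K_U and K_U ⊄ I_U. Then I_U and K_U are exactly the two maximal right ideals of End(U), both are two-sided, and End(U)/I_U and End(U)/K_U are division rings. -/
/-- A maximal right ideal: a proper right ideal such that the only right ideal properly
containing it is the whole ring. -/
def IsMaximalRightIdealSet {S : Type*} [Ring S] (I : Set S) : Prop :=
  IsRightIdealSet I ∧ I ≠ Set.univ ∧
    ∀ J : Set S, IsRightIdealSet J → I ⊆ J → J ≠ Set.univ → J = I

section Aux

variable {R U : Type*} [Ring R] [AddCommGroup U] [Module R U]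

open Function

private lemma noninj_iff (f : Module.End R U) :
    ¬Injective f ↔ ∃ x : U, f x = 0 ∧ x ≠ 0 := by
  constructor
  · intro h
    by_contra hc
    push_neg at hc
    exact h fun a b hab => sub_eq_zero.mp (hc _ (by rw [map_sub, hab, sub_self]))
  · rintro ⟨x, hfx, hx0⟩ h
    exact hx0 (h (by rw [hfx, map_zero]))

private lemma neg_noninj {f : Module.End R U} (hf : ¬Injective f) : ¬Injective (-f) := by
  rw [noninj_iff] at hf ⊢
  obtain ⟨x, hfx, hx⟩ := hf
  exact ⟨x, by simp [hfx], hx⟩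

private lemma neg_nonsurj {f : Module.End R U} (hf : ¬Surjective f) : ¬Surjective (-f) := by
  intro h
  exact hf fun u => by
    obtain ⟨a, ha⟩ := h (-u)
    have h2 : -(f a) = -u := ha
    exact ⟨a, neg_injective h2⟩

private lemma zero_noninj [Nontrivial U] : ¬Injective (0 : Module.End R U) := by
  obtain ⟨x, hx⟩ := exists_ne (0 : U)
  exact (noninj_iff _).mpr ⟨x, rfl, hx⟩

private lemma zero_nonsurj [Nontrivial U] : ¬Surjective (0 : Module.End R U) := by
  obtain ⟨x, hx⟩ := exists_ne (0 : U)
  intro h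
  obtain ⟨a, ha⟩ := h x
  exact hx ha.symm

private lemma I_add (huni : IsUniserialModule R U) {f g : Module.End R U}
    (hf : ¬Injective f) (hg : ¬Injective g) : ¬Injective (f + g) := by
  rw [noninj_iff] at hf hg ⊢
  obtain ⟨x, hfx, hx⟩ := hf
  obtain ⟨y, hgy, hy⟩ := hg
  rcases huni (LinearMap.ker f) (LinearMap.ker g) with h | h
  · have hgx : g x = 0 := h (LinearMap.mem_ker.mpr hfx)
    exact ⟨x, by simp [LinearMap.add_apply, hfx, hgx], hx⟩
  · have hfy : f y = 0 := h (LinearMap.mem_ker.mpr hgy)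
    exact ⟨y, by simp [LinearMap.add_apply, hfy, hgy], hy⟩

private lemma K_add (huni : IsUniserialModule R U) {f g : Module.End R U}
    (hf : ¬Surjective f) (hg : ¬Surjective g) : ¬Surjective (f + g) := by
  intro hs
  rcases huni (LinearMap.range f) (LinearMap.range g) with h | h
  · apply hg
    intro u
    obtain ⟨a, ha⟩ := hs u
    obtain ⟨b, hb⟩ := h (LinearMap.mem_range_self f a)
    refine ⟨b + a, ?_⟩
    rw [map_add, hb]
    exact ha
  · apply hf
    intro u
    obtain ⟨a, ha⟩ := hs u
    obtain ⟨b, hb⟩ := h (LinearMap.mem_range_self g a)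
    refine ⟨a + b, ?_⟩
    rw [map_add, hb]
    rw [show (f + g) a = f a + g a from rfl] at ha
    exact ha

private lemma I_mul_left {f : Module.End R U} (hf : ¬Injective f) (s : Module.End R U) :
    ¬Injective (s * f) := by
  intro h
  exact hf fun a b hab => h (show s (f a) = s (f b) by rw [hab])

private lemma I_mul_right [Nontrivial U] (huni : IsUniserialModule R U)
    {f : Module.End R U} (hf : ¬Injective f) (s : Module.End R U) :
    ¬Injective (f * s) := by
  intro h
  obtain ⟨x, hfx, hx⟩ := (noninj_iff f).mp hf
  rcases huni (LinearMap.ker f) (LinearMap.range s) with hc | hc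
  · obtain ⟨y, hy⟩ := hc (LinearMap.mem_ker.mpr hfx)
    apply hx
    have hy0 : y = 0 := h (show f (s y) = f (s 0) by rw [hy, hfx]; simp)
    rw [← hy, hy0, map_zero]
  · obtain ⟨z, hz⟩ := exists_ne (0 : U)
    apply hz
    refine h (show f (s z) = f (s 0) from ?_)
    have h1 : f (s z) = 0 := hc (LinearMap.mem_range_self s z)
    rw [h1]; simp

private lemma K_mul_right {f : Module.End R U} (hf : ¬Surjective f) (s : Module.End R U) :
    ¬Surjective (f * s) := by
  intro h
  exact hf fun u => by obtain ⟨a, ha⟩ := h u; exact ⟨s a, ha⟩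

private lemma K_mul_left [Nontrivial U] (huni : IsUniserialModule R U)
    {f : Module.End R U} (hf : ¬Surjective f) (s : Module.End R U) :
    ¬Surjective (s * f) := by
  intro h
  rcases huni (LinearMap.ker s) (LinearMap.range f) with hc | hc
  · apply hf
    intro u
    obtain ⟨a, ha⟩ := h (s u)
    have hker : u - f a ∈ LinearMap.ker s := by
      rw [LinearMap.mem_ker, map_sub, ← ha]
      exact sub_self _
    obtain ⟨b, hb⟩ := hc hker
    refine ⟨a + b, ?_⟩
    rw [map_add, hb]
    abel
  · obtain ⟨z, hz⟩ := exists_ne (0 : U)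
    obtain ⟨a, ha⟩ := h z
    apply hz
    rw [← ha]
    exact hc (LinearMap.mem_range_self f a)

private lemma bij_add (huni : IsUniserialModule R U) {f g : Module.End R U}
    (hfi : Injective f) (hfs : ¬Surjective f)
    (hgs : Surjective g) (hgi : ¬Injective g) : Bijective (f + g) := by
  constructor
  · rcases huni (LinearMap.ker (f + g)) (LinearMap.ker g) with hc | hc
    · intro a b hab
      have hab0 : (f + g) (a - b) = 0 := by rw [map_sub, hab, sub_self]
      have hg0 : g (a - b) = 0 := hc (LinearMap.mem_ker.mpr hab0)
      have hf0 : f (a - b) = 0 := by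
        have h1 : f (a - b) + g (a - b) = 0 := hab0
        rwa [hg0, add_zero] at h1
      exact sub_eq_zero.mp (hfi (by rw [hf0, map_zero]))
    · exfalso
      obtain ⟨y, hgy, hy⟩ := (noninj_iff g).mp hgi
      have h2 : (f + g) y = 0 := hc (LinearMap.mem_ker.mpr hgy)
      have hfy : f y = 0 := by
        have h1 : f y + g y = 0 := h2
        rwa [hgy, add_zero] at h1
      exact hy (hfi (by rw [hfy, map_zero]))
  · rcases huni (LinearMap.range f) (LinearMap.range (f + g)) with hc | hc
    · intro u
      obtain ⟨a, ha⟩ := hgs u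
      obtain ⟨b, hb⟩ := hc (LinearMap.mem_range_self f a)
      refine ⟨a - b, ?_⟩
      rw [map_sub, hb]
      show f a + g a - f a = u
      rw [add_sub_cancel_left, ha]
    · exfalso
      apply hfs
      intro u
      obtain ⟨a, ha⟩ := hgs u
      obtain ⟨b, hb⟩ := hc (LinearMap.mem_range_self (f + g) a)
      refine ⟨b - a, ?_⟩
      rw [map_sub, hb]
      show f a + g a - f a = u
      rw [add_sub_cancel_left, ha]

private lemma one_mem_eq_univ {S : Type*} [Ring S] {J : Set S}
    (hJ : IsRightIdealSet J) (h1 : (1 : S) ∈ J) : J = Set.univ := by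
  apply Set.eq_univ_of_forall
  intro s
  have := hJ.2.2 1 h1 s
  rwa [one_mul] at this

end Aux

/-- Let `U` be a non-zero uniserial module with `I_U ⊄ K_U` and `K_U ⊄ I_U`, where
`I_U` is the set of non-injective endomorphisms and `K_U` the set of non-surjective
endomorphisms of `U`. Then `I_U` and `K_U` are exactly the two maximal right ideals of
`End(U)`, both are two-sided, and the quotients `End(U)/I_U` and `End(U)/K_U` are
division rings (every element outside the ideal is invertible modulo the ideal). -/
theorem uniserial_two_maximal_right_ideals
    {R U : Type*} [Ring R] [AddCommGroup U] [Module R U]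
    [Nontrivial U] (huni : IsUniserialModule R U)
    (hIK : ¬ {f : Module.End R U | ¬Function.Injective f} ⊆
             {f : Module.End R U | ¬Function.Surjective f})
    (hKI : ¬ {f : Module.End R U | ¬Function.Surjective f} ⊆
             {f : Module.End R U | ¬Function.Injective f}) :
    ({f : Module.End R U | ¬Function.Injective f} ≠
        {f : Module.End R U | ¬Function.Surjective f}) ∧
    IsMaximalRightIdealSet {f : Module.End R U | ¬Function.Injective f} ∧
    IsMaximalRightIdealSet {f : Module.End R U | ¬Function.Surjective f} ∧
    (∀ J : Set (Module.End R U), IsMaximalRightIdealSet J →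
      J = {f : Module.End R U | ¬Function.Injective f} ∨
      J = {f : Module.End R U | ¬Function.Surjective f}) ∧
    (∀ f : Module.End R U, ¬Function.Injective f → ∀ s : Module.End R U,
      ¬Function.Injective (s * f) ∧ ¬Function.Injective (f * s)) ∧
    (∀ f : Module.End R U, ¬Function.Surjective f → ∀ s : Module.End R U,
      ¬Function.Surjective (s * f) ∧ ¬Function.Surjective (f * s)) ∧
    (∀ f : Module.End R U, Function.Injective f → ∃ g : Module.End R U,
      ¬Function.Injective ⇑(g * f - 1 : Module.End R U) ∧ ¬Function.Injective ⇑(f * g - 1 : Module.End R U)) ∧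
    (∀ f : Module.End R U, Function.Surjective f → ∃ g : Module.End R U,
      ¬Function.Surjective ⇑(g * f - 1 : Module.End R U) ∧ ¬Function.Surjective ⇑(f * g - 1 : Module.End R U)) := by
  set I : Set (Module.End R U) := {f | ¬Function.Injective f} with hIdef
  set K : Set (Module.End R U) := {f | ¬Function.Surjective f} with hKdef
  -- extract witnesses
  obtain ⟨α, hαI, hαnK⟩ := Set.not_subset.mp hIK
  obtain ⟨β, hβK, hβnI⟩ := Set.not_subset.mp hKI
  have hαninj : ¬Function.Injective α := hαI
  have hαsurj : Function.Surjective α := not_not.mp hαnK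
  have hβnsurj : ¬Function.Surjective β := hβK
  have hβinj : Function.Injective β := not_not.mp hβnI
  -- the ideals
  have hIideal : IsRightIdealSet I :=
    ⟨zero_noninj, fun x hx y hy => I_add huni hx hy, fun x hx s => I_mul_right huni hx s⟩
  have hKideal : IsRightIdealSet K :=
    ⟨zero_nonsurj, fun x hx y hy => K_add huni hx hy, fun x hx s => K_mul_right hx s⟩
  have h1inj : Function.Injective (1 : Module.End R U) := fun a b h => h
  have h1surj : Function.Surjective (1 : Module.End R U) := fun u => ⟨u, rfl⟩
  have hIproper : I ≠ Set.univ := fun h => (h ▸ Set.mem_univ (1 : Module.End R U)) h1inj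
  have hKproper : K ≠ Set.univ := fun h => (h ▸ Set.mem_univ (1 : Module.End R U)) h1surj
  -- key invertibility statements
  have key7 : ∀ f : Module.End R U, Function.Injective f → ∃ g : Module.End R U,
      ¬Function.Injective ⇑(g * f - 1 : Module.End R U) ∧
      ¬Function.Injective ⇑(f * g - 1 : Module.End R U) := by
    intro f hf
    by_cases hfs : Function.Surjective f
    · obtain ⟨v, hv⟩ := (Module.End.isUnit_iff f).mpr ⟨hf, hfs⟩
      refine ⟨↑v⁻¹, ?_, ?_⟩
      · have e : ((↑v⁻¹ : Module.End R U) * f - 1) = 0 := by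
          rw [← hv, Units.inv_mul, sub_self]
        rw [e]; exact zero_noninj
      · have e : (f * (↑v⁻¹ : Module.End R U) - 1) = 0 := by
          rw [← hv, Units.mul_inv, sub_self]
        rw [e]; exact zero_noninj
    · have hb : Function.Bijective (f + α) := bij_add huni hf hfs hαsurj hαninj
      obtain ⟨v, hv⟩ := (Module.End.isUnit_iff (f + α)).mpr hb
      have h1 : (↑v⁻¹ : Module.End R U) * (f + α) = 1 := by rw [← hv, Units.inv_mul]
      have h2 : (f + α) * (↑v⁻¹ : Module.End R U) = 1 := by rw [← hv, Units.mul_inv]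
      refine ⟨↑v⁻¹, ?_, ?_⟩
      · have e : ((↑v⁻¹ : Module.End R U) * f - 1) = -(↑v⁻¹ * α) := by
          rw [← h1, ← mul_neg, ← mul_sub]
          congr 1
          abel
        rw [e]
        exact neg_noninj (I_mul_left hαninj _)
      · have e : (f * (↑v⁻¹ : Module.End R U) - 1) = -(α * ↑v⁻¹) := by
          rw [← h2, ← neg_mul, ← sub_mul]
          congr 1
          abel
        rw [e]
        exact neg_noninj (I_mul_right huni hαninj _)
  have key8 : ∀ f : Module.End R U, Function.Surjective f → ∃ g : Module.End R U,
      ¬Function.Surjective ⇑(g * f - 1 : Module.End R U) ∧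
      ¬Function.Surjective ⇑(f * g - 1 : Module.End R U) := by
    intro f hf
    by_cases hfi : Function.Injective f
    · obtain ⟨v, hv⟩ := (Module.End.isUnit_iff f).mpr ⟨hfi, hf⟩
      refine ⟨↑v⁻¹, ?_, ?_⟩
      · have e : ((↑v⁻¹ : Module.End R U) * f - 1) = 0 := by
          rw [← hv, Units.inv_mul, sub_self]
        rw [e]; exact zero_nonsurj
      · have e : (f * (↑v⁻¹ : Module.End R U) - 1) = 0 := by
          rw [← hv, Units.mul_inv, sub_self]
        rw [e]; exact zero_nonsurj
    · have hb : Function.Bijective (β + f) := bij_add huni hβinj hβnsurj hf hfi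
      obtain ⟨v, hv⟩ := (Module.End.isUnit_iff (β + f)).mpr hb
      have h1 : (↑v⁻¹ : Module.End R U) * (β + f) = 1 := by rw [← hv, Units.inv_mul]
      have h2 : (β + f) * (↑v⁻¹ : Module.End R U) = 1 := by rw [← hv, Units.mul_inv]
      refine ⟨↑v⁻¹, ?_, ?_⟩
      · have e : ((↑v⁻¹ : Module.End R U) * f - 1) = -(↑v⁻¹ * β) := by
          rw [← h1, ← mul_neg, ← mul_sub]
          congr 1
          abel
        rw [e]
        exact neg_nonsurj (K_mul_left huni hβnsurj _)
      · have e : (f * (↑v⁻¹ : Module.End R U) - 1) = -(β * ↑v⁻¹) := by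
          rw [← h2, ← neg_mul, ← sub_mul]
          congr 1
          abel
        rw [e]
        exact neg_nonsurj (K_mul_right hβnsurj _)
  -- maximality of I
  have hImax : IsMaximalRightIdealSet I := by
    refine ⟨hIideal, hIproper, ?_⟩
    intro J hJ hIJ hJne
    refine Set.Subset.antisymm ?_ hIJ
    intro f hfJ
    by_contra hfI
    have hfinj : Function.Injective f := not_not.mp hfI
    obtain ⟨g, _, hfg⟩ := key7 f hfinj
    apply hJne
    apply one_mem_eq_univ hJ
    have hfgJ : f * g ∈ J := hJ.2.2 f hfJ g
    have hsubJ : (f * g - 1) * (-1) ∈ J := hJ.2.2 _ (hIJ hfg) (-1)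
    have := hJ.2.1 _ hfgJ _ hsubJ
    have e : f * g + (f * g - 1) * (-1) = 1 := by noncomm_ring
    rwa [e] at this
  have hKmax : IsMaximalRightIdealSet K := by
    refine ⟨hKideal, hKproper, ?_⟩
    intro J hJ hKJ hJne
    refine Set.Subset.antisymm ?_ hKJ
    intro f hfJ
    by_contra hfK
    have hfsurj : Function.Surjective f := not_not.mp hfK
    obtain ⟨g, _, hfg⟩ := key8 f hfsurj
    apply hJne
    apply one_mem_eq_univ hJ
    have hfgJ : f * g ∈ J := hJ.2.2 f hfJ g
    have hsubJ : (f * g - 1) * (-1) ∈ J := hJ.2.2 _ (hKJ hfg) (-1)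
    have := hJ.2.1 _ hfgJ _ hsubJ
    have e : f * g + (f * g - 1) * (-1) = 1 := by noncomm_ring
    rwa [e] at this
  -- classification of maximal right ideals
  have hclass : ∀ J : Set (Module.End R U), IsMaximalRightIdealSet J → J = I ∨ J = K := by
    intro J ⟨hJ, hJne, hJmax⟩
    have hJIK : J ⊆ I ∪ K := by
      intro f hfJ
      by_contra hf
      rw [Set.mem_union] at hf
      push_neg at hf
      have hfinj : Function.Injective f := not_not.mp hf.1
      have hfsurj : Function.Surjective f := not_not.mp hf.2
      obtain ⟨v, hv⟩ := (Module.End.isUnit_iff f).mpr ⟨hfinj, hfsurj⟩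
      apply hJne
      apply one_mem_eq_univ hJ
      have := hJ.2.2 f hfJ (↑v⁻¹)
      rwa [← hv, Units.mul_inv] at this
    by_cases hJI : J ⊆ I
    · exact Or.inl (hJmax I hIideal hJI hIproper).symm
    · right
      have hJK : J ⊆ K := by
        obtain ⟨a, haJ, haI⟩ := Set.not_subset.mp hJI
        have hainj : Function.Injective a := not_not.mp haI
        have hansurj : ¬Function.Surjective a := (hJIK haJ).resolve_left haI
        intro b hbJ
        by_contra hbK
        have hbsurj : Function.Surjective b := not_not.mp hbK
        have hbninj : ¬Function.Injective b := (hJIK hbJ).resolve_right hbK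
        have hb : Function.Bijective (a + b) := bij_add huni hainj hansurj hbsurj hbninj
        obtain ⟨v, hv⟩ := (Module.End.isUnit_iff (a + b)).mpr hb
        apply hJne
        apply one_mem_eq_univ hJ
        have habJ : a + b ∈ J := hJ.2.1 a haJ b hbJ
        have := hJ.2.2 _ habJ (↑v⁻¹)
        rwa [← hv, Units.mul_inv] at this
      exact (hJmax K hKideal hJK hKproper).symm
  refine ⟨?_, hImax, hKmax, hclass, ?_, ?_, key7, key8⟩
  · intro h
    exact hαnK (h ▸ hαI)
  · intro f hf s
    exact ⟨I_mul_left hf s, I_mul_right huni hf s⟩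
  · intro f hf s
    exact ⟨K_mul_left huni hf s, K_mul_right hf s⟩
end

section
/- Let φ : R → S be a local ring morphism (i.e., φ(r) invertible in S implies r invertible in R). If S is semilocal, then R is semilocal. -/
/-!
Composing `φ` with `S → S/J(S)` gives a local homomorphism `ψ : R → T` into a semisimple,
hence left artinian and left noetherian, ring `T`. If `1 - b a` is not a unit of `R`, then
`ψ (1 - b a)` is not right regular in `T`, which makes the left annihilator of `ψ (a (1 - b a))`
strictly larger than that of `ψ a`. Choosing `b` with `ann (ψ (1 - b a))` maximal shows
`a - a b a ∈ J(R)`, so `R/J(R)` is von Neumann regular. For a left ideal `I` of `R/J(R)`, choose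
a lift `A` of `1 - f`, with `f ∈ I` idempotent, maximising `ann (ψ A)`: if `f` did not generate
`I`, regularity would supply a nonzero idempotent of `I` orthogonal to `f`, and adding it to `f`
would enlarge the annihilator. So every left ideal of `R/J(R)` is generated by an idempotent,
and `R/J(R)` is semisimple.
-/

universe u v

/-- A ring `R` is semilocal if `R/J(R)` is semisimple artinian: there is a surjective
ring homomorphism from `R` onto a semisimple ring whose kernel is the Jacobson radical
of `R`. -/
def IsSemilocalRing (R : Type u) [Ring R] : Prop :=
  ∃ (T : Type u) (_ : Ring T) (_ : IsSemisimpleRing T) (π : R →+* T),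
    Function.Surjective π ∧
      (RingHom.ker π : Set R) = ((⊥ : Ideal R).jacobson : Set R)

section Jacobson

variable {R : Type*} [Ring R]

theorem mem_jacobson_iff_forall_isUnit_one_sub_mul {x : R} :
    x ∈ Ring.jacobson R ↔ ∀ y, IsUnit (1 - y * x) := by
  rw [← Ideal.jacobson_bot, Ideal.mem_jacobson_iff]
  simp only [Ideal.mem_bot, sub_eq_zero]
  constructor
  · intro h
    have hleft : ∀ y, ∃ z, z * (1 - y * x) = 1 := fun y ↦ by
      obtain ⟨z, hz⟩ := h (-y)
      exact ⟨z, (by noncomm_ring : z * (1 - y * x) = z * -y * x + z).trans hz⟩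
    intro y
    obtain ⟨z, hz⟩ := hleft y
    -- `z = 1 - (-(z * y)) * x` has a left inverse `w` too, which forces `w = 1 - y * x`.
    obtain ⟨w, hw⟩ := hleft (-(z * y))
    have hwz : w * z = 1 := by
      rw [← hw]; congr 1
      calc z = z * (1 - y * x) + z * y * x := by noncomm_ring
        _ = 1 - -(z * y) * x := by rw [hz]; noncomm_ring
    have hw' : w = 1 - y * x := by
      calc w = w * z * (1 - y * x) := by rw [mul_assoc, hz, mul_one]
        _ = 1 - y * x := by rw [hwz, one_mul]
    exact isUnit_iff_exists.2 ⟨z, by rw [← hw', hwz], hz⟩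
  · intro h y
    obtain ⟨u, hu⟩ := h (-y)
    refine ⟨↑u⁻¹, ?_⟩
    calc (↑u⁻¹ : R) * y * x + ↑u⁻¹ = ↑u⁻¹ * (1 - -y * x) := by noncomm_ring
      _ = 1 := by rw [← hu, Units.inv_mul]

theorem isLocalHom_of_surjective_of_ker_le_jacobson {S : Type*} [Ring S] {π : R →+* S}
    (hπ : Function.Surjective π) (hker : RingHom.ker π ≤ Ring.jacobson R) : IsLocalHom π := by
  have isUnit_of_map_eq_one (a : R) (ha : π a = 1) : IsUnit a := by
    have := mem_jacobson_iff_forall_isUnit_one_sub_mul.1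
      (hker (by rw [RingHom.mem_ker, map_sub, ha, map_one, sub_self] : a - 1 ∈ _)) (-1)
    rwa [neg_one_mul, sub_neg_eq_add, add_sub_cancel] at this
  refine ⟨fun s ⟨u, hu⟩ ↦ ?_⟩
  obtain ⟨t, ht⟩ := hπ ↑u⁻¹
  have hst := isUnit_of_map_eq_one (s * t) (by rw [map_mul, ← hu, ht, Units.mul_inv])
  have hts := isUnit_of_map_eq_one (t * s) (by rw [map_mul, ← hu, ht, Units.inv_mul])
  exact isUnit_iff_exists_and_exists.2
    ⟨⟨t * ↑hst.unit⁻¹, by rw [← mul_assoc, hst.mul_val_inv]⟩,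
      ⟨↑hts.unit⁻¹ * t, by rw [mul_assoc, hts.val_inv_mul]⟩⟩

end Jacobson

section LeftAnnihilator

variable {T : Type*} [Ring T]

def leftAnnihilator (x : T) : Submodule T T :=
  LinearMap.ker (LinearMap.toSpanSingleton T T x)

@[simp]
theorem mem_leftAnnihilator {x t : T} : t ∈ leftAnnihilator x ↔ t * x = 0 := by
  simp [leftAnnihilator]

theorem leftAnnihilator_le_mul (x y : T) : leftAnnihilator x ≤ leftAnnihilator (x * y) :=
  fun t ht ↦ by rw [mem_leftAnnihilator] at ht ⊢; rw [← mul_assoc, ht, zero_mul]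

theorem leftAnnihilator_lt_mul_one_sub_mul [IsArtinianRing T] {a b : T}
    (h : ¬IsUnit (1 - b * a)) : leftAnnihilator a < leftAnnihilator (a * (1 - b * a)) := by
  rw [IsArtinianRing.isUnit_iff_isRightRegular, isRightRegular_iff_left_eq_zero_of_mul] at h
  push Not at h
  obtain ⟨t, ht, ht0⟩ := h
  have htba : t * b * a = t := by
    rw [mul_sub, mul_one, sub_eq_zero] at ht
    rw [mul_assoc, ← ht]
  refine SetLike.lt_iff_le_and_exists.2 ⟨leftAnnihilator_le_mul a _, t * b, ?_, ?_⟩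
  · rw [mem_leftAnnihilator, ← mul_assoc, htba, ht]
  · rwa [mem_leftAnnihilator, htba]

end LeftAnnihilator

section VonNeumannRegular

variable {Q : Type*} [Ring Q]

theorem exists_ne_zero_mul_eq_zero_of_ne_span {I : Ideal Q} {f : Q} (hf : IsIdempotentElem f)
    (hfI : f ∈ I) (hne : I ≠ Ideal.span {f}) : ∃ y ∈ I, y ≠ 0 ∧ y * f = 0 := by
  obtain ⟨x, hxI, hx⟩ := Set.not_subset.1 fun h : (I : Set Q) ⊆ Ideal.span {f} ↦
    hne (le_antisymm h ((Ideal.span_singleton_le_iff_mem I).2 hfI))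
  refine ⟨x - x * f, I.sub_mem hxI (I.mul_mem_left x hfI), fun h ↦ hx ?_, ?_⟩
  · rw [sub_eq_zero.1 h]
    exact Ideal.mul_mem_left _ x (Ideal.mem_span_singleton_self f)
  · rw [sub_mul, mul_assoc, hf.eq, sub_self]

theorem exists_isIdempotentElem_orthogonal (hQ : ∀ y : Q, ∃ c, y * c * y = y) {I : Ideal Q}
    {f y : Q} (hf : IsIdempotentElem f) (hyI : y ∈ I) (hy0 : y ≠ 0) (hyf : y * f = 0) :
    ∃ g ∈ I, IsIdempotentElem g ∧ g ≠ 0 ∧ f * g = 0 ∧ g * f = 0 := by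
  obtain ⟨c, hc⟩ := hQ y
  have he : IsIdempotentElem (c * y) := by
    rw [IsIdempotentElem, mul_assoc, ← mul_assoc y, hc]
  have hye : y * (c * y) = y := by rw [← mul_assoc, hc]
  have heI : c * y ∈ I := I.mul_mem_left c hyI
  have hef : c * y * f = 0 := by rw [mul_assoc, hyf, mul_zero]
  generalize c * y = e at he hye heI hef
  refine ⟨e - f * e, I.sub_mem heI (I.mul_mem_left f heI), ?_, ?_, ?_, ?_⟩
  · calc (e - f * e) * (e - f * e) = e * e - (e * f) * e - f * (e * e) + f * (e * f) * e := by
          noncomm_ring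
      _ = e - f * e := by rw [he.eq, hef]; noncomm_ring
  · intro h
    apply hy0
    rw [← hye, sub_eq_zero.1 h, ← mul_assoc, hyf, zero_mul]
  · rw [mul_sub, ← mul_assoc, hf.eq, sub_self]
  · rw [sub_mul, mul_assoc, hef, mul_zero, sub_self]

theorem isSemisimpleRing_of_forall_ideal_eq_span_idempotent
    (h : ∀ I : Ideal Q, ∃ e, IsIdempotentElem e ∧ I = Ideal.span {e}) : IsSemisimpleRing Q :=
  (isSemisimpleModule_iff Q Q).2 ⟨fun I ↦ by
    obtain ⟨e, he, rfl⟩ := h I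
    refine ⟨LinearMap.ker (LinearMap.toSpanSingleton Q Q e), ?_⟩
    simpa [LinearMap.range_toSpanSingleton] using
      LinearMap.IsIdempotentElem.isCompl (LinearMap.toSpanSingleton_isIdempotentElem_iff.2 he)⟩

end VonNeumannRegular

section LocalHom

variable {R T : Type*} [Ring R] [Ring T] [IsArtinianRing T]

theorem leftAnnihilator_map_lt_map_mul_one_sub_mul (ψ : R →+* T) [IsLocalHom ψ] {a b : R}
    (h : ¬IsUnit (1 - b * a)) :
    leftAnnihilator (ψ a) < leftAnnihilator (ψ (a * (1 - b * a))) := by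
  rw [← isUnit_map_iff ψ, map_sub, map_one, map_mul] at h
  simpa using leftAnnihilator_lt_mul_one_sub_mul h

theorem exists_sub_mul_mul_mem_jacobson (ψ : R →+* T) [IsLocalHom ψ] (a : R) :
    ∃ b, a - a * b * a ∈ Ring.jacobson R := by
  obtain ⟨b, -, hb⟩ := (InvImage.wf (fun b : R ↦ leftAnnihilator (ψ (1 - b * a)))
    wellFounded_gt).has_min Set.univ ⟨0, trivial⟩
  refine ⟨b, mem_jacobson_iff_forall_isUnit_one_sub_mul.2 fun c ↦ by_contra fun hc ↦ ?_⟩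
  rw [show 1 - c * (a - a * b * a) = 1 - c * a * (1 - b * a) by noncomm_ring] at hc
  have := leftAnnihilator_map_lt_map_mul_one_sub_mul ψ hc
  rw [show (1 - b * a) * (1 - c * a * (1 - b * a))
    = 1 - (b + (1 - b * a) * c * (1 - a * b)) * a by noncomm_ring] at this
  exact hb _ trivial this

theorem exists_mul_mul_eq_self_quotient_jacobson (ψ : R →+* T) [IsLocalHom ψ]
    (y : R ⧸ Ring.jacobson R) :
    ∃ c, y * c * y = y := by
  obtain ⟨a, rfl⟩ := Ideal.Quotient.mk_surjective y
  obtain ⟨b, hb⟩ := exists_sub_mul_mul_mem_jacobson ψ a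
  refine ⟨Ideal.Quotient.mk _ b, ?_⟩
  rw [← Ideal.Quotient.eq_zero_iff_mem, map_sub, map_mul, map_mul, sub_eq_zero] at hb
  exact hb.symm

theorem exists_ideal_eq_span_idempotent_quotient_jacobson (ψ : R →+* T) [IsLocalHom ψ]
    (I : Ideal (R ⧸ Ring.jacobson R)) :
    ∃ f, IsIdempotentElem f ∧ I = Ideal.span {f} := by
  set π := Ideal.Quotient.mk (Ring.jacobson R)
  obtain ⟨A, ⟨hf, hfI⟩, hA⟩ := (InvImage.wf (fun A : R ↦ leftAnnihilator (ψ A))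
    wellFounded_gt).has_min {A | IsIdempotentElem (1 - π A) ∧ 1 - π A ∈ I}
    ⟨1, by simp [π, IsIdempotentElem.one]⟩
  refine ⟨1 - π A, hf, by_contra fun hne ↦ ?_⟩
  obtain ⟨y, hyI, hy0, hyf⟩ := exists_ne_zero_mul_eq_zero_of_ne_span hf hfI hne
  obtain ⟨g, hgI, hg, hg0, hfg, hgf⟩ := exists_isIdempotentElem_orthogonal
    (exists_mul_mul_eq_self_quotient_jacobson ψ) hf hyI hy0 hyf
  obtain ⟨b, rfl⟩ := Ideal.Quotient.mk_surjective g
  have hbA : π b * π A = π b := by rwa [mul_sub, mul_one, sub_eq_zero, eq_comm] at hgf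
  have hAb : π A * π b = π b := by rwa [sub_mul, one_mul, sub_eq_zero, eq_comm] at hfg
  -- `π (1 - b * A) = 1 - π b` is a nontrivial idempotent, hence not a unit.
  have hunit : ¬IsUnit (1 - b * A) := fun hu ↦ hg0 <| by
    have hu' : IsUnit (1 - π b) := by simpa [π, hbA] using hu.map π
    simpa using (IsIdempotentElem.iff_eq_one_of_isUnit hu').1 hg.one_sub
  have hlift : 1 - π (A * (1 - b * A)) = 1 - π A + π b := by
    rw [map_mul, map_sub, map_one, map_mul, mul_sub, mul_one, ← mul_assoc, hAb, hbA]; abel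
  refine hA _ ⟨?_, ?_⟩ (leftAnnihilator_map_lt_map_mul_one_sub_mul ψ hunit)
  · rw [hlift]; exact hf.add hg (by rw [hfg, hgf, add_zero])
  · rw [hlift]; exact I.add_mem hfI hgI

theorem isSemisimpleRing_quotient_jacobson_of_isLocalHom (ψ : R →+* T) [IsLocalHom ψ] :
    IsSemisimpleRing (R ⧸ Ring.jacobson R) :=
  isSemisimpleRing_of_forall_ideal_eq_span_idempotent
    (exists_ideal_eq_span_idempotent_quotient_jacobson ψ)

end LocalHom

/-- If `φ : R → S` is a local ring morphism and `S` is semilocal, then `R` is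
semilocal. -/
theorem isSemilocalRing_of_localRingHom {R : Type u} {S : Type v} [Ring R] [Ring S]
    (φ : R →+* S) (hloc : ∀ r : R, IsUnit (φ r) → IsUnit r)
    (hS : IsSemilocalRing S) : IsSemilocalRing R := by
  obtain ⟨T, _, _, π, hπ, hker⟩ := hS
  have : IsLocalHom φ := ⟨hloc⟩
  have : IsLocalHom π := isLocalHom_of_surjective_of_ker_le_jacobson hπ <| by
    rw [← SetLike.coe_subset_coe, hker, Ideal.jacobson_bot]
  refine ⟨R ⧸ Ring.jacobson R, inferInstance,
    isSemisimpleRing_quotient_jacobson_of_isLocalHom (π.comp φ), Ideal.Quotient.mk _,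
    Ideal.Quotient.mk_surjective, ?_⟩
  rw [Ideal.mk_ker, Ideal.jacobson_bot]
end

section
/- Let R be a ring admitting a local ring morphism R → D_1 × ... × D_m into a finite product of division rings. Then R/J(R) is isomorphic to a direct product of at most m division rings. -/
universe u v

section helpers

variable {R : Type u} [Ring R]

/-- product of a nonempty list of elements of a left ideal lies in the ideal -/
lemma listProdMemIdeal (M : Ideal R) : ∀ (l : List R), l ≠ [] → (∀ x ∈ l, x ∈ M) → l.prod ∈ M
  | [], h, _ => absurd rfl h
  | [a], _, h => by simpa using h a (by simp)
  | a :: b :: l, _, h => by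
    rw [List.prod_cons]
    have : (b :: l).prod ∈ M :=
      listProdMemIdeal M (b :: l) (by simp) fun x hx => h x (List.mem_cons_of_mem _ hx)
    simpa using M.smul_mem a this

/-- if some member of a list lies in a right-absorbing left ideal, so does the product -/
lemma listProdMemOfMem (K : Ideal R) (habs : ∀ a b : R, a ∈ K → a * b ∈ K) :
    ∀ (l : List R) (x : R), x ∈ l → x ∈ K → l.prod ∈ K
  | [], x, hx, _ => absurd hx (by simp)
  | a :: l, x, hx, hxK => by
    rw [List.prod_cons]
    rcases List.mem_cons.mp hx with rfl | hx'
    · exact habs _ _ hxK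
    · simpa using K.smul_mem a (listProdMemOfMem K habs l x hx' hxK)

/-- complete primeness for list products -/
lemma existsMemOfListProdMem (K : Ideal R) (hone : (1 : R) ∉ K)
    (hprime : ∀ a b : R, a * b ∈ K → a ∈ K ∨ b ∈ K) :
    ∀ (l : List R), l.prod ∈ K → ∃ x ∈ l, x ∈ K
  | [], h => absurd (by simpa using h) hone
  | a :: l, h => by
    rw [List.prod_cons] at h
    rcases hprime _ _ h with h' | h'
    · exact ⟨a, by simp, h'⟩
    · obtain ⟨x, hx, hxK⟩ := existsMemOfListProdMem K hone hprime l h'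
      exact ⟨x, List.mem_cons_of_mem _ hx, hxK⟩

/-- prime avoidance: a left ideal covered by finitely many completely prime two-sided
ideals is contained in one of them. -/
lemma ideal_le_of_subset_union {ι : Type*} [DecidableEq ι] (K : ι → Ideal R)
    (hprime : ∀ i, ∀ a b : R, a * b ∈ K i → a ∈ K i ∨ b ∈ K i)
    (habs : ∀ i, ∀ a b : R, a ∈ K i → a * b ∈ K i)
    (hone : ∀ i, (1 : R) ∉ K i)
    (M : Ideal R) (s : Finset ι) (hcov : ∀ x ∈ M, ∃ i ∈ s, x ∈ K i) :
    ∃ i ∈ s, M ≤ K i := by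
  induction s using Finset.strongInduction with
  | _ s IH =>
  rcases s.eq_empty_or_nonempty with rfl | ⟨a, ha⟩
  · obtain ⟨i, hi, -⟩ := hcov 0 M.zero_mem
    exact absurd hi (by simp)
  by_cases hA : ∃ i ∈ s, ∀ x ∈ M, ∃ j ∈ s.erase i, x ∈ K j
  · obtain ⟨i, hi, h⟩ := hA
    obtain ⟨j, hj, hMj⟩ := IH (s.erase i) (Finset.erase_ssubset hi) h
    exact ⟨j, Finset.mem_of_mem_erase hj, hMj⟩
  push_neg at hA
  have hx : ∀ i ∈ s, ∃ x, x ∈ M ∧ (∀ j ∈ s, j ≠ i → x ∉ K j) ∧ x ∈ K i := by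
    intro i hi
    obtain ⟨x, hxM, hxn⟩ := hA i hi
    have hnotin : ∀ j ∈ s, j ≠ i → x ∉ K j := fun j hj hne hmem =>
      hxn j (Finset.mem_erase.mpr ⟨hne, hj⟩) hmem
    obtain ⟨i', hi', hxi'⟩ := hcov x hxM
    have hii : i' = i := by
      by_contra h
      exact hnotin i' hi' h hxi'
    exact ⟨x, hxM, hnotin, hii ▸ hxi'⟩
  choose! x hxM hxn hxK using hx
  rcases (s.erase a).eq_empty_or_nonempty with he | hne
  · -- s = {a}
    refine ⟨a, ha, fun y hy => ?_⟩
    obtain ⟨i, hi, hyi⟩ := hcov y hy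
    have : i = a := by
      by_contra h
      exact (Finset.ne_empty_of_mem (Finset.mem_erase.mpr ⟨h, hi⟩)) he
    exact this ▸ hyi
  · set l := (s.erase a).toList.map x with hl
    have hlne : l ≠ [] := by
      simp only [hl, ne_eq, List.map_eq_nil_iff, Finset.toList_eq_nil]
      exact hne.ne_empty
    have hlM : ∀ z ∈ l, z ∈ M := by
      intro z hz
      simp only [hl, List.mem_map, Finset.mem_toList] at hz
      obtain ⟨i, hi, rfl⟩ := hz
      exact hxM i (Finset.mem_of_mem_erase hi)
    have hPM : l.prod ∈ M := listProdMemIdeal M l hlne hlM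
    have hPK : ∀ i ∈ s.erase a, l.prod ∈ K i := by
      intro i hi
      exact listProdMemOfMem (K i) (habs i) l (x i)
        (by simp only [hl, List.mem_map, Finset.mem_toList]; exact ⟨i, hi, rfl⟩)
        (hxK i (Finset.mem_of_mem_erase hi))
    have hyM : x a + l.prod ∈ M := M.add_mem (hxM a ha) hPM
    obtain ⟨i, hi, hyi⟩ := hcov _ hyM
    by_cases hia : i = a
    · subst hia
      have hPa : l.prod ∈ K i := by
        have := (K i).sub_mem hyi (hxK i hi)
        simpa using this
      obtain ⟨z, hz, hzK⟩ := existsMemOfListProdMem (K i) (hone i) (hprime i) l hPa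
      simp only [hl, List.mem_map, Finset.mem_toList] at hz
      obtain ⟨j, hj, rfl⟩ := hz
      exact absurd hzK (hxn j (Finset.mem_of_mem_erase hj) i hi (Finset.mem_erase.mp hj).1.symm)
    · have hPi : l.prod ∈ K i := hPK i (Finset.mem_erase.mpr ⟨hia, hi⟩)
      have hxa : x a ∈ K i := by
        have := (K i).sub_mem hyi hPi
        simpa using this
      exact absurd hxa (hxn a ha i hi hia)

end helpers

section helpers2

variable {R : Type u} [Ring R]

/-- comaximality passes to intersections, for right-absorbing ideals -/
lemma one_mem_pair (I J₁ J₂ : Ideal R)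
    (hI : ∀ a b : R, a ∈ I → a * b ∈ I) (hJ : ∀ a b : R, a ∈ J₁ → a * b ∈ J₁)
    (h1 : ∃ a ∈ I, ∃ b ∈ J₁, a + b = 1) (h2 : ∃ c ∈ I, ∃ d ∈ J₂, c + d = 1) :
    ∃ a ∈ I, ∃ b, b ∈ J₁ ∧ b ∈ J₂ ∧ a + b = 1 := by
  obtain ⟨a, haI, b, hbJ, hab⟩ := h1
  obtain ⟨c, hcI, d, hdJ, hcd⟩ := h2
  refine ⟨a * c + a * d + b * c, ?_, b * d, hJ b d hbJ, by simpa using J₂.smul_mem b hdJ, ?_⟩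
  · exact I.add_mem (I.add_mem (hI a c haI) (hI a d haI)) (by simpa using I.smul_mem b hcI)
  · have : (a + b) * (c + d) = 1 := by rw [hab, hcd, one_mul]
    calc a * c + a * d + b * c + b * d = (a + b) * (c + d) := by
          rw [add_mul, mul_add, mul_add]; abel
      _ = 1 := this

lemma one_mem_sup_inf {ι : Type*} (I : Ideal R) (J : ι → Ideal R)
    (hI : ∀ a b : R, a ∈ I → a * b ∈ I) (hJ : ∀ i, ∀ a b : R, a ∈ J i → a * b ∈ J i)
    (s : Finset ι) (h : ∀ j ∈ s, ∃ a ∈ I, ∃ b ∈ J j, a + b = 1) :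
    ∃ a ∈ I, ∃ b, (∀ j ∈ s, b ∈ J j) ∧ a + b = 1 := by
  classical
  induction s using Finset.induction with
  | empty => exact ⟨0, I.zero_mem, 1, by simp⟩
  | @insert j t hjt IH =>
    obtain ⟨a, haI, b, hbJ, hab⟩ := IH fun j' hj' => h j' (Finset.mem_insert_of_mem hj')
    have h2 := h j (Finset.mem_insert_self j t)
    set J2 : Ideal R := ⨅ j' ∈ t, J j' with hJ2
    have hbJ2 : b ∈ J2 := by
      simp only [hJ2, Submodule.mem_iInf]
      exact hbJ
    obtain ⟨a', ha'I, b', hb'1, hb'2, hab'⟩ :=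
      one_mem_pair I (J j) J2 hI (hJ j) h2 ⟨a, haI, b, hbJ2, hab⟩
    refine ⟨a', ha'I, b', fun j' hj' => ?_, hab'⟩
    rcases Finset.mem_insert.mp hj' with rfl | hj'
    · exact hb'1
    · have := hb'2
      simp only [hJ2, Submodule.mem_iInf] at this
      exact this j' hj'

end helpers2

section helpers3

variable {R : Type u} [Ring R] {S : Type w} [Ring S]

lemma quot_coe_eq_zero (f : R →+* S) (r : R) :
    ((r : (TwoSidedIdeal.ker f).ringCon.Quotient) = 0) ↔ f r = 0 := by
  rw [← RingCon.coe_zero, RingCon.eq]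
  show f r = f 0 ↔ _
  simp

lemma quot_nontrivial (f : R →+* S) (h : RingHom.ker f ≠ ⊤) :
    Nontrivial (TwoSidedIdeal.ker f).ringCon.Quotient := by
  refine ⟨1, 0, fun he => h ?_⟩
  rw [← RingCon.coe_one] at he
  rw [Ideal.eq_top_iff_one, RingHom.mem_ker, ← (quot_coe_eq_zero f 1)]
  exact he

lemma quot_isUnit_or_zero (f : R →+* S) (hmax : (RingHom.ker f).IsMaximal) :
    ∀ a : (TwoSidedIdeal.ker f).ringCon.Quotient, IsUnit a ∨ a = 0 := by
  set M : Ideal R := RingHom.ker f with hM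
  set Q := (TwoSidedIdeal.ker f).ringCon.Quotient with hQ
  have hrel : ∀ x y : R, ((x : Q) = (y : Q)) ↔ x - y ∈ M := by
    intro x y
    rw [RingCon.eq]
    show f x = f y ↔ _
    rw [hM, RingHom.mem_ker, map_sub, sub_eq_zero]
  have hMtop : M ≠ ⊤ := hmax.ne_top
  -- key step: any element not in M has a left inverse mod M
  have key : ∀ r : R, r ∉ M → ∃ b : R, b ∉ M ∧ (b : Q) * (r : Q) = 1 := by
    intro r hr
    have hsup : M ⊔ Ideal.span {r} = ⊤ := by
      refine hmax.out.2 (M ⊔ Ideal.span {r}) (lt_of_le_of_ne le_sup_left fun he => hr ?_)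
      exact (le_sup_right.trans_eq he.symm) (Submodule.mem_span_singleton_self r)
    have h1 : (1 : R) ∈ M ⊔ Ideal.span {r} := by rw [hsup]; trivial
    obtain ⟨y, hy, z, hz, hyz⟩ := Submodule.mem_sup.mp h1
    obtain ⟨b, rfl⟩ := Submodule.mem_span_singleton.mp hz
    rw [smul_eq_mul] at hyz
    have hbr1 : b * r - 1 ∈ M := by
      have : b * r - 1 = -y := by rw [← hyz]; abel
      rw [this]
      exact M.neg_mem hy
    have hb : b ∉ M := by
      intro hbM
      have hbrM : b * r ∈ M := by
        rw [hM, RingHom.mem_ker, map_mul]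
        rw [hM, RingHom.mem_ker] at hbM
        rw [hbM, zero_mul]
      have : (1 : R) ∈ M := by
        have := M.sub_mem hbrM hbr1
        simpa using this
      exact hMtop (Ideal.eq_top_iff_one M |>.mpr this)
    refine ⟨b, hb, ?_⟩
    rw [← RingCon.coe_mul, ← RingCon.coe_one, hrel]
    exact hbr1
  intro a
  obtain ⟨r, rfl⟩ := Quotient.mk''_surjective a
  by_cases hr : r ∈ M
  · right
    rw [show (Quotient.mk'' r : Q) = (r : Q) from rfl, quot_coe_eq_zero]
    rwa [hM, RingHom.mem_ker] at hr
  · left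
    obtain ⟨b, hb, hbr⟩ := key r hr
    obtain ⟨c, -, hcb⟩ := key b hb
    have hcr : (c : Q) = (r : Q) := by
      calc (c : Q) = c * ((b : Q) * r) := by rw [hbr, mul_one]
        _ = ((c : Q) * b) * r := by rw [mul_assoc]
        _ = r := by rw [hcb, one_mul]
    have hrb : (r : Q) * (b : Q) = 1 := by rw [← hcr]; exact hcb
    exact ⟨⟨(r : Q), (b : Q), hrb, hbr⟩, rfl⟩

end helpers3


/-- If a ring `R` admits a local ring morphism into a finite product of `m` division
rings, then `R/J(R)` is isomorphic to a direct product of at most `m` division rings: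
there are `k ≤ m` division rings and a surjective ring homomorphism from `R` onto their
product whose kernel is the Jacobson radical of `R`. -/
theorem quotient_jacobson_product_of_localRingHom_to_divisionRings
    {R : Type u} [Ring R] {m : ℕ} (D : Fin m → Type v) [∀ i, DivisionRing (D i)]
    (φ : R →+* ∀ i, D i) (hloc : ∀ r : R, IsUnit (φ r) → IsUnit r) :
    ∃ (k : ℕ), k ≤ m ∧ ∃ (E : Fin k → Type u) (_ : ∀ i, DivisionRing (E i))
      (π : R →+* ∀ i, E i), Function.Surjective π ∧
        (RingHom.ker π : Set R) = ((⊥ : Ideal R).jacobson : Set R) := by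
  classical
  set ψ : ∀ i : Fin m, R →+* D i := fun i => (Pi.evalRingHom D i).comp φ with hψ
  set K : Fin m → Ideal R := fun i => RingHom.ker (ψ i) with hKdef
  have hmemK : ∀ i (r : R), r ∈ K i ↔ ψ i r = 0 := fun i r => RingHom.mem_ker
  have hprime : ∀ i, ∀ a b : R, a * b ∈ K i → a ∈ K i ∨ b ∈ K i := by
    intro i a b h
    rw [hmemK, map_mul] at h
    rcases mul_eq_zero.mp h with h' | h'
    · exact Or.inl ((hmemK i a).mpr h')
    · exact Or.inr ((hmemK i b).mpr h')
  have habs : ∀ i, ∀ a b : R, a ∈ K i → a * b ∈ K i := by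
    intro i a b h
    rw [hmemK] at h ⊢
    rw [map_mul, h, zero_mul]
  have hone : ∀ i, (1 : R) ∉ K i := by
    intro i h
    rw [hmemK, map_one] at h
    exact one_ne_zero h
  have hcov : ∀ r : R, ¬ IsUnit r → ∃ i, r ∈ K i := by
    intro r hr
    by_contra h
    push_neg at h
    refine hr (hloc r ?_)
    have hne : ∀ i, φ r i ≠ 0 := by
      intro i hi
      exact h i ((hmemK i r).mpr hi)
    exact ⟨⟨φ r, fun i => (φ r i)⁻¹,
      funext fun i => mul_inv_cancel₀ (hne i), funext fun i => inv_mul_cancel₀ (hne i)⟩, rfl⟩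
  have hmaxK : ∀ M : Ideal R, M.IsMaximal → ∃ i, M = K i := by
    intro M hM
    have hcovM : ∀ x ∈ M, ∃ i ∈ Finset.univ, x ∈ K i := by
      intro x hx
      obtain ⟨i, hi⟩ := hcov x fun hu => hM.ne_top (Ideal.eq_top_of_isUnit_mem M hx hu)
      exact ⟨i, Finset.mem_univ i, hi⟩
    obtain ⟨i, -, hle⟩ := ideal_le_of_subset_union K hprime habs hone M Finset.univ hcovM
    refine ⟨i, hM.eq_of_le ?_ hle⟩
    intro htop
    exact hone i (htop ▸ trivial)
  set T : Finset (Fin m) := Finset.univ.filter (fun i => (K i).IsMaximal) with hT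
  set Ks : Finset (Ideal R) := T.image K with hKs
  refine ⟨Ks.card, ?_, ?_⟩
  · calc Ks.card ≤ T.card := Finset.card_image_le
      _ ≤ (Finset.univ : Finset (Fin m)).card := Finset.card_le_card (Finset.filter_subset _ _)
      _ = m := by simp
  set e : Fin Ks.card ≃ {x // x ∈ Ks} := Ks.equivFin.symm with he
  have hrep : ∀ j : Fin Ks.card, ∃ i : Fin m, (K i).IsMaximal ∧ K i = (e j : Ideal R) := by
    intro j
    have hmem : (e j : Ideal R) ∈ T.image K := (e j).2
    obtain ⟨i, hiT, hKi⟩ := Finset.mem_image.mp hmem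
    rw [hT, Finset.mem_filter] at hiT
    exact ⟨i, hiT.2, hKi⟩
  choose rep hrepmax hrepeq using hrep
  have hinj : ∀ j j' : Fin Ks.card, K (rep j) = K (rep j') → j = j' := by
    intro j j' h
    have : (e j : Ideal R) = (e j' : Ideal R) := by rw [← hrepeq, ← hrepeq, h]
    exact e.injective (Subtype.ext this)
  have hmaxrep : ∀ M : Ideal R, M.IsMaximal → ∃ j, M = K (rep j) := by
    intro M hM
    obtain ⟨i, rfl⟩ := hmaxK M hM
    have hmem : K i ∈ Ks :=
      Finset.mem_image_of_mem K (by rw [hT]; exact Finset.mem_filter.mpr ⟨Finset.mem_univ i, hM⟩)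
    exact ⟨e.symm ⟨K i, hmem⟩, by rw [hrepeq, Equiv.apply_symm_apply]⟩
  set cc : Fin Ks.card → RingCon R := fun j => (TwoSidedIdeal.ker (ψ (rep j))).ringCon with hcc
  have hmax' : ∀ j, (RingHom.ker (ψ (rep j))).IsMaximal := fun j => hrepmax j
  have hcoe0 : ∀ j (r : R), ((r : (cc j).Quotient) = 0) ↔ r ∈ K (rep j) := by
    intro j r
    rw [hmemK]
    exact quot_coe_eq_zero (ψ (rep j)) r
  have hrel : ∀ j (x y : R), ((x : (cc j).Quotient) = (y : (cc j).Quotient)) ↔ x - y ∈ K (rep j) := by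
    intro j x y
    rw [RingCon.eq]
    show ψ (rep j) x = ψ (rep j) y ↔ _
    rw [hmemK, map_sub, sub_eq_zero]
  refine ⟨fun j => (cc j).Quotient,
    fun j => @DivisionRing.ofIsUnitOrEqZero _
      (quot_nontrivial _ (hmax' j).ne_top) _ (quot_isUnit_or_zero _ (hmax' j)),
    Pi.ringHom (fun j => RingCon.mk' (cc j)), ?_, ?_⟩
  · -- surjectivity
    intro t
    have hpair : ∀ j j' : Fin Ks.card, j ≠ j' →
        ∃ a ∈ K (rep j), ∃ b ∈ K (rep j'), a + b = 1 := by
      intro j j' hne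
      have hMne : K (rep j) ≠ K (rep j') := fun h => hne (hinj _ _ h)
      have hsup : K (rep j) ⊔ K (rep j') = ⊤ := by
        by_contra h
        have h1 : K (rep j) ⊔ K (rep j') = K (rep j) := by
          rcases lt_or_eq_of_le (le_sup_left : K (rep j) ≤ _) with hlt | heq
          · exact absurd ((hrepmax j).out.2 _ hlt) h
          · exact heq.symm
        have hle : K (rep j') ≤ K (rep j) := le_sup_right.trans_eq h1
        rcases lt_or_eq_of_le hle with hlt | heq
        · exact (hrepmax j).ne_top ((hrepmax j').out.2 _ hlt)
        · exact hMne heq.symm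
      have h1 : (1 : R) ∈ K (rep j) ⊔ K (rep j') := by rw [hsup]; trivial
      obtain ⟨a, ha, b, hb, hab⟩ := Submodule.mem_sup.mp h1
      exact ⟨a, ha, b, hb, hab⟩
    have hu : ∀ j : Fin Ks.card, ∃ u : R,
        (u - 1 ∈ K (rep j)) ∧ ∀ j' : Fin Ks.card, j' ≠ j → u ∈ K (rep j') := by
      intro j
      obtain ⟨a, haI, b, hb, hab⟩ := one_mem_sup_inf (K (rep j)) (fun j' => K (rep j'))
        (habs _) (fun j' => habs _) (Finset.univ.erase j)
        (fun j' hj' => hpair j j' (Finset.mem_erase.mp hj').1.symm)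
      refine ⟨b, ?_, fun j' hne => hb j' (Finset.mem_erase.mpr ⟨hne, Finset.mem_univ _⟩)⟩
      have hb1 : b - 1 = -a := by rw [← hab]; abel
      rw [hb1]
      exact (K (rep j)).neg_mem haI
    choose u hu1 hu2 using hu
    have hmk : ∀ j, ∃ r : R, (r : (cc j).Quotient) = t j := fun j => Quotient.mk''_surjective (t j)
    choose rmap hrmap using hmk
    refine ⟨∑ j, u j * rmap j, ?_⟩
    funext j
    show ((∑ j', u j' * rmap j' : R) : (cc j).Quotient) = t j
    rw [← hrmap j, hrel]
    have h1 : u j * rmap j - rmap j ∈ K (rep j) := by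
      have := habs (rep j) _ (rmap j) (hu1 j)
      rw [sub_mul, one_mul] at this
      exact this
    have h2 : ∑ j' ∈ Finset.univ.erase j, u j' * rmap j' ∈ K (rep j) :=
      Ideal.sum_mem _ fun j' hj' =>
        habs (rep j) _ _ (hu2 j' j (Finset.mem_erase.mp hj').1.symm)
    have hsplit : (∑ j', u j' * rmap j') - rmap j =
        (u j * rmap j - rmap j) + ∑ j' ∈ Finset.univ.erase j, u j' * rmap j' := by
      rw [← Finset.add_sum_erase _ _ (Finset.mem_univ j)]
      abel
    rw [hsplit]
    exact (K (rep j)).add_mem h1 h2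
  · -- kernel equality
    ext r
    simp only [SetLike.mem_coe, RingHom.mem_ker]
    constructor
    · intro h
      rw [Ideal.jacobson]
      rw [Ideal.mem_sInf]
      rintro J ⟨-, hJmax⟩
      obtain ⟨j, rfl⟩ := hmaxrep J hJmax
      have := congrFun h j
      rw [Pi.zero_apply] at this
      exact (hcoe0 j r).mp this
    · intro h
      rw [Ideal.jacobson, Ideal.mem_sInf] at h
      funext j
      rw [Pi.zero_apply]
      exact (hcoe0 j r).mpr (h ⟨bot_le, hrepmax j⟩)
end

section
/- Let U and V be non-zero uniserial right R-modules. Then U and V have the same monogeny class (there exist monomorphisms U → V and V → U) if and only if there exist morphisms f : U → V and g : V → U such that g∘f is injective. -/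
/-- Two non-zero uniserial modules `U`, `V` have the same monogeny class (there exist
monomorphisms `U → V` and `V → U`) iff there exist morphisms `f : U → V` and `g : V → U`
with `g ∘ f` injective. -/
theorem sameMonogenyClass_iff_comp_injective
    {R U V : Type*} [Ring R] [AddCommGroup U] [Module R U] [AddCommGroup V] [Module R V]
    [Nontrivial U] [Nontrivial V]
    (hU : IsUniserialModule R U) (hV : IsUniserialModule R V) :
    ((∃ f : U →ₗ[R] V, Function.Injective f) ∧ (∃ g : V →ₗ[R] U, Function.Injective g)) ↔
      ∃ (f : U →ₗ[R] V) (g : V →ₗ[R] U), Function.Injective (g.comp f) := by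
  constructor
  · rintro ⟨⟨f, hf⟩, ⟨g, hg⟩⟩
    exact ⟨f, g, hg.comp hf⟩
  · rintro ⟨f, g, hgf⟩
    have hf : Function.Injective f := fun a b h => hgf (by simp [LinearMap.comp_apply, h])
    refine ⟨⟨f, hf⟩, ⟨g, ?_⟩⟩
    rw [← LinearMap.ker_eq_bot]
    rcases hV (LinearMap.ker g) (LinearMap.range f) with h | h
    · -- ker g ≤ range f and ker g ⊓ range f = ⊥
      rw [eq_bot_iff]
      intro v hv
      obtain ⟨u, rfl⟩ := h hv
      have : u = 0 := hgf (by simpa [LinearMap.comp_apply] using hv)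
      simp [this]
    · -- range f ≤ ker g : contradiction
      exfalso
      obtain ⟨u, hu⟩ := exists_ne (0 : U)
      have : g (f u) = 0 := h ⟨u, rfl⟩
      exact hu (hgf (by simpa [LinearMap.comp_apply] using this))
end

section
/- Let U and V be non-zero uniserial right R-modules. Then U and V have the same epigeny class (there exist epimorphisms U → V and V → U) if and only if there exist morphisms f : U → V and g : V → U such that g∘f is surjective. -/
/-- Two non-zero uniserial modules `U`, `V` have the same epigeny class (there exist
epimorphisms `U → V` and `V → U`) iff there exist morphisms `f : U → V` and `g : V → U`
with `g ∘ f` surjective. -/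
theorem sameEpigenyClass_iff_comp_surjective
    {R U V : Type*} [Ring R] [AddCommGroup U] [Module R U] [AddCommGroup V] [Module R V]
    [Nontrivial U] [Nontrivial V]
    (hU : IsUniserialModule R U) (hV : IsUniserialModule R V) :
    ((∃ f : U →ₗ[R] V, Function.Surjective f) ∧ (∃ g : V →ₗ[R] U, Function.Surjective g)) ↔
      ∃ (f : U →ₗ[R] V) (g : V →ₗ[R] U), Function.Surjective (g.comp f) := by
  constructor
  · rintro ⟨⟨f, hf⟩, ⟨g, hg⟩⟩
    exact ⟨f, g, hg.comp hf⟩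
  · rintro ⟨f, g, hgf⟩
    have hg : Function.Surjective g := fun u => by
      obtain ⟨x, hx⟩ := hgf u; exact ⟨f x, hx⟩
    refine ⟨⟨f, ?_⟩, ⟨g, hg⟩⟩
    -- V = range f ⊔ ker g
    have hsup : LinearMap.range f ⊔ LinearMap.ker g = ⊤ := by
      rw [eq_top_iff]
      intro v _
      obtain ⟨u, hu⟩ := hgf (g v)
      refine Submodule.mem_sup.2 ⟨f u, ⟨u, rfl⟩, v - f u, ?_, by abel⟩
      simp only [LinearMap.mem_ker, map_sub, sub_eq_zero]
      exact (hu : g (f u) = g v).symm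
    rcases hV (LinearMap.range f) (LinearMap.ker g) with h | h
    · exfalso
      have : LinearMap.ker g = ⊤ := by
        rw [← hsup, sup_eq_right.2 h]
      have hg0 : g = 0 := LinearMap.ker_eq_top.mp this
      obtain ⟨u, hu⟩ := exists_ne (0 : U)
      obtain ⟨v, hv⟩ := hg u
      rw [hg0] at hv
      exact hu (hv.symm.trans rfl)
    · have : LinearMap.range f = ⊤ := by
        rw [← hsup, sup_eq_left.2 h]
      exact LinearMap.range_eq_top.mp this
end

section
/- Let U_1, ..., U_r and V_1, ..., V_s be non-zero uniserial right R-modules. If U_1 ⊕ ... ⊕ U_r ≅ V_1 ⊕ ... ⊕ V_s as R-modules, then r = s and there exist two permutations σ, τ of {1,...,r} such that [U_k]_m = [V_{σ(k)}]_m and [U_k]_e = [V_{τ(k)}]_e for every k. -/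
/-
Induction on the number of summands. Split off `X = U₀` from `⨁ U ≅ ⨁ V`; the entries
`f_l : X → V_l`, `g_l : V_l → X` of this isomorphism and its inverse satisfy `∑ g_l f_l = 1`, so
since `X` is uniserial some `g_l₁ f_l₁` is injective and some `g_l₂ f_l₂` is surjective.
If some `g_l f_l` is an automorphism, `X ≅ V_l` and `X` has the complement `⨁_{l' ≠ l} V_l'`.
Otherwise `g_l₁ f_l₁ + g_l₂ f_l₂` is an automorphism (on uniserial modules, a monomorphism that is
not onto plus an epimorphism that is not one-to-one is bijective), so `X` is a direct summand of
`V_l₁ ⊕ V_l₂` whose complement `W` has `[W]_m = [V_l₂]_m` and `[W]_e = [V_l₁]_e`, and `X` has the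
complement `W ⊕ ⨁_{l ≠ l₁, l₂} V_l`. In both cases a projection onto `X` restricts to an
isomorphism on the copy of `X` in `⨁ U` as well, so the complement `⨁_{k ≠ 0} U_k` of `X` is
isomorphic to the one found, and induction applies; the epigeny bijection differs from the
monogeny one by the transposition of `l₁` and `l₂`.
-/

universe u

universe v w

open LinearMap Function

/-- `[A]_m = [B]_m` in the notation of the paper. -/
def SameMonogenyClass (R A B : Type*) [Ring R] [AddCommGroup A] [Module R A] [AddCommGroup B]
    [Module R B] : Prop :=
  (∃ f : A →ₗ[R] B, Injective f) ∧ ∃ g : B →ₗ[R] A, Injective g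

/-- `[A]_e = [B]_e` in the notation of the paper. -/
def SameEpigenyClass (R A B : Type*) [Ring R] [AddCommGroup A] [Module R A] [AddCommGroup B]
    [Module R B] : Prop :=
  (∃ f : A →ₗ[R] B, Surjective f) ∧ ∃ g : B →ₗ[R] A, Surjective g

section Classes

variable {R A B C : Type*} [Ring R] [AddCommGroup A] [Module R A] [AddCommGroup B] [Module R B]
  [AddCommGroup C] [Module R C]

variable (R A) in
theorem SameMonogenyClass.refl : SameMonogenyClass R A A :=
  ⟨⟨id, injective_id⟩, ⟨id, injective_id⟩⟩

theorem SameMonogenyClass.trans (h₁ : SameMonogenyClass R A B) (h₂ : SameMonogenyClass R B C) :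
    SameMonogenyClass R A C :=
  let ⟨⟨f₁, hf₁⟩, ⟨g₁, hg₁⟩⟩ := h₁
  let ⟨⟨f₂, hf₂⟩, ⟨g₂, hg₂⟩⟩ := h₂
  ⟨⟨f₂ ∘ₗ f₁, hf₂.comp hf₁⟩, ⟨g₁ ∘ₗ g₂, hg₁.comp hg₂⟩⟩

variable (R A) in
theorem SameEpigenyClass.refl : SameEpigenyClass R A A :=
  ⟨⟨id, surjective_id⟩, ⟨id, surjective_id⟩⟩

theorem SameEpigenyClass.trans (h₁ : SameEpigenyClass R A B) (h₂ : SameEpigenyClass R B C) :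
    SameEpigenyClass R A C :=
  let ⟨⟨f₁, hf₁⟩, ⟨g₁, hg₁⟩⟩ := h₁
  let ⟨⟨f₂, hf₂⟩, ⟨g₂, hg₂⟩⟩ := h₂
  ⟨⟨f₂ ∘ₗ f₁, hf₂.comp hf₁⟩, ⟨g₁ ∘ₗ g₂, hg₁.comp hg₂⟩⟩

end Classes

namespace IsUniserialModule

variable {R M N : Type*} [Ring R] [AddCommGroup M] [Module R M] [AddCommGroup N] [Module R N]

theorem eq_bot_or_eq_bot_of_inf_eq_bot (hM : IsUniserialModule R M) {p q : Submodule R M}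
    (h : p ⊓ q = ⊥) : p = ⊥ ∨ q = ⊥ := by
  rcases hM p q with hpq | hqp
  · exact Or.inl (by rwa [inf_eq_left.2 hpq] at h)
  · exact Or.inr (by rwa [inf_eq_right.2 hqp] at h)

theorem eq_top_or_eq_top_of_sup_eq_top (hM : IsUniserialModule R M) {p q : Submodule R M}
    (h : p ⊔ q = ⊤) : p = ⊤ ∨ q = ⊤ := by
  rcases hM p q with hpq | hqp
  · exact Or.inr (by rwa [sup_eq_right.2 hpq] at h)
  · exact Or.inl (by rwa [sup_eq_left.2 hqp] at h)

theorem of_injective (hN : IsUniserialModule R N) {f : M →ₗ[R] N} (hf : Injective f) :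
    IsUniserialModule R M := fun p q =>
  (hN (p.map f) (q.map f)).imp (Submodule.map_le_map_iff_of_injective hf p q).1
    (Submodule.map_le_map_iff_of_injective hf q p).1

theorem injective_or_injective_of_injective_add (hM : IsUniserialModule R M) {f g : M →ₗ[R] N}
    (h : Injective (f + g)) : Injective f ∨ Injective g := by
  simp only [← ker_eq_bot] at h ⊢
  refine hM.eq_bot_or_eq_bot_of_inf_eq_bot (eq_bot_iff.2 fun x hx => ?_)
  obtain ⟨hf, hg⟩ := Submodule.mem_inf.1 hx
  rw [← h, mem_ker, LinearMap.add_apply, mem_ker.1 hf, mem_ker.1 hg, add_zero]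

theorem surjective_or_surjective_of_surjective_add (hN : IsUniserialModule R N)
    {f g : M →ₗ[R] N} (h : Surjective (f + g)) : Surjective f ∨ Surjective g := by
  simp only [← range_eq_top] at h ⊢
  refine hN.eq_top_or_eq_top_of_sup_eq_top (eq_top_iff.2 ?_)
  rw [← h]
  rintro _ ⟨x, rfl⟩
  exact Submodule.add_mem_sup (mem_range_self f x) (mem_range_self g x)

theorem exists_injective_of_injective_sum [Nontrivial M] (hM : IsUniserialModule R M)
    {ι : Type*} (s : Finset ι) (f : ι → M →ₗ[R] N) (h : Injective ⇑(∑ i ∈ s, f i)) :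
    ∃ i ∈ s, Injective (f i) := by
  classical
  induction s using Finset.induction_on with
  | empty =>
    obtain ⟨x, y, hxy⟩ := exists_pair_ne M
    exact absurd (h (by simp)) hxy
  | insert i s hi ih =>
    rw [Finset.sum_insert hi] at h
    rcases hM.injective_or_injective_of_injective_add h with hf | hs
    · exact ⟨i, Finset.mem_insert_self i s, hf⟩
    · obtain ⟨j, hj, hfj⟩ := ih hs
      exact ⟨j, Finset.mem_insert_of_mem hj, hfj⟩

theorem exists_surjective_of_surjective_sum [Nontrivial N] (hN : IsUniserialModule R N)
    {ι : Type*} (s : Finset ι) (f : ι → M →ₗ[R] N) (h : Surjective ⇑(∑ i ∈ s, f i)) :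
    ∃ i ∈ s, Surjective (f i) := by
  classical
  induction s using Finset.induction_on with
  | empty =>
    obtain ⟨y, hy⟩ := exists_ne (0 : N)
    obtain ⟨x, hx⟩ := h y
    exact absurd (by simpa using hx.symm) hy
  | insert i s hi ih =>
    rw [Finset.sum_insert hi] at h
    rcases hN.surjective_or_surjective_of_surjective_add h with hf | hs
    · exact ⟨i, Finset.mem_insert_self i s, hf⟩
    · obtain ⟨j, hj, hfj⟩ := ih hs
      exact ⟨j, Finset.mem_insert_of_mem hj, hfj⟩

theorem injective_of_injective_comp [Nontrivial M] (hN : IsUniserialModule R N)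
    {f : M →ₗ[R] N} {g : N →ₗ[R] M} (h : Injective (g ∘ₗ f)) : Injective g := by
  have hinf : ker g ⊓ range f = ⊥ := by
    refine eq_bot_iff.2 fun x hx => ?_
    obtain ⟨hg, y, rfl⟩ := Submodule.mem_inf.1 hx
    rw [h (show g (f y) = g (f 0) by rw [mem_ker.1 hg, map_zero, map_zero]), map_zero]
    rfl
  have hrange : range f ≠ ⊥ := by
    rw [Ne, range_eq_bot]
    rintro rfl
    obtain ⟨x, y, hxy⟩ := exists_pair_ne M
    exact hxy (h (by simp))
  exact ker_eq_bot.1 ((hN.eq_bot_or_eq_bot_of_inf_eq_bot hinf).resolve_right hrange)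

theorem surjective_of_surjective_comp [Nontrivial M] (hN : IsUniserialModule R N)
    {f : M →ₗ[R] N} {g : N →ₗ[R] M} (h : Surjective (g ∘ₗ f)) : Surjective f := by
  have hsup : range f ⊔ ker g = ⊤ := by
    refine eq_top_iff.2 fun v _ => ?_
    obtain ⟨y, hy⟩ := h (g v)
    rw [← add_sub_cancel (f y) v]
    exact Submodule.add_mem_sup (mem_range_self f y) (by simpa [sub_eq_zero] using hy.symm)
  have hker : ker g ≠ ⊤ := by
    rw [Ne, ker_eq_top]
    rintro rfl
    obtain ⟨x, hx⟩ := exists_ne (0 : M)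
    obtain ⟨y, hy⟩ := h x
    exact hx (by simpa using hy.symm)
  exact range_eq_top.1 ((hN.eq_top_or_eq_top_of_sup_eq_top hsup).resolve_right hker)

theorem bijective_add (hM : IsUniserialModule R M) (hN : IsUniserialModule R N)
    {f g : M →ₗ[R] N} (hf : Injective f) (hf' : ¬Surjective f) (hg : Surjective g)
    (hg' : ¬Injective g) : Bijective (f + g) := by
  constructor
  · refine (hM.injective_or_injective_of_injective_add (f := f + g) (g := -g) ?_).resolve_right
      fun hng => hg' fun x y hxy => hng (by simp [hxy])
    simpa using hf
  · refine (hN.surjective_or_surjective_of_surjective_add (f := f + g) (g := -f) ?_).resolve_right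
      fun hnf => hf' fun y =>
        let ⟨x, hx⟩ := hnf (-y)
        ⟨x, by simpa using congrArg Neg.neg hx⟩
    simpa using hg

end IsUniserialModule

section LinearAlgebra

variable {R M N P Q X Y : Type*} [Ring R] [AddCommGroup M] [Module R M] [AddCommGroup N]
  [Module R N] [AddCommGroup P] [Module R P] [AddCommGroup Q] [Module R Q]
  [AddCommGroup X] [Module R X] [AddCommGroup Y] [Module R Y]

theorem isCompl_ker_range_of_bijective_comp {φ : M →ₗ[R] N} {ψ : N →ₗ[R] P}
    (h : Bijective (ψ ∘ₗ φ)) : IsCompl (ker ψ) (range φ) := by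
  refine ⟨Submodule.disjoint_def.2 ?_, Submodule.codisjoint_iff_exists_add_eq.2 fun v => ?_⟩
  · rintro _ hψ ⟨x, rfl⟩
    rw [h.1 (show ψ (φ x) = ψ (φ 0) by rw [mem_ker.1 hψ, map_zero, map_zero]), map_zero]
  · obtain ⟨x, hx⟩ := h.2 (ψ v)
    exact ⟨v - φ x, φ x, by simpa [sub_eq_zero] using hx.symm, mem_range_self φ x,
      sub_add_cancel v _⟩

theorem exists_linearEquiv_prod_ker {φ : M →ₗ[R] N} {ψ : N →ₗ[R] P}
    (h : Bijective (ψ ∘ₗ φ)) : ∃ ρ : (M × ker ψ) ≃ₗ[R] N, ∀ x, ρ (x, 0) = φ x :=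
  ⟨(LinearEquiv.ofInjective φ (Injective.of_comp (f := ψ) h.1)).prodCongr (.refl R _) ≪≫ₗ
      LinearEquiv.prodComm R _ _ ≪≫ₗ
      Submodule.prodEquivOfIsCompl _ _ (isCompl_ker_range_of_bijective_comp h),
    fun x => by simp⟩

/-- `Y` and `ker π` are both complements of the image of `X` in `P`. -/
theorem nonempty_linearEquiv_ker_of_bijective_comp_inl (e : (X × Y) ≃ₗ[R] P) (π : P →ₗ[R] Q)
    (h : Bijective (π ∘ₗ e.toLinearMap ∘ₗ inl R X Y)) : Nonempty (Y ≃ₗ[R] ker π) := by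
  have hker : ker (snd R X Y ∘ₗ e.symm.toLinearMap) = range (e.toLinearMap ∘ₗ inl R X Y) := by
    rw [ker_comp, ker_snd, range_comp, Submodule.comap_equiv_eq_map_symm, LinearEquiv.symm_symm]
  have hsurj := (snd_surjective (R := R) (M := X)).comp e.symm.surjective
  exact ⟨(quotKerEquivOfSurjective _ hsurj).symm ≪≫ₗ Submodule.quotEquivOfEq _ _ hker ≪≫ₗ
    Submodule.quotientEquivOfIsCompl _ _ (isCompl_ker_range_of_bijective_comp h).symm⟩

theorem nonempty_linearEquiv_of_bijective_comp_inl {X' Y' : Type*} [AddCommGroup X']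
    [Module R X'] [AddCommGroup Y'] [Module R Y'] (e : (X × Y) ≃ₗ[R] P) (e' : (X' × Y') ≃ₗ[R] P)
    (π : P →ₗ[R] Q)
    (h : Bijective (π ∘ₗ e.toLinearMap ∘ₗ inl R X Y))
    (h' : Bijective (π ∘ₗ e'.toLinearMap ∘ₗ inl R X' Y')) : Nonempty (Y ≃ₗ[R] Y') :=
  let ⟨f⟩ := nonempty_linearEquiv_ker_of_bijective_comp_inl e π h
  let ⟨f'⟩ := nonempty_linearEquiv_ker_of_bijective_comp_inl e' π h'
  ⟨f ≪≫ₗ f'.symm⟩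

section KerCoprod

variable {V₁ V₂ : Type*} [AddCommGroup V₁] [Module R V₁] [AddCommGroup V₂] [Module R V₂]
  {f : X →ₗ[R] V₁} {g : X →ₗ[R] V₂} {f' : V₁ →ₗ[R] X} {g' : V₂ →ₗ[R] X}

theorem sameMonogenyClass_ker_coprod (hf : Injective f) (hf' : Injective f')
    (hc : IsCompl (ker (f'.coprod g')) (range (f.prod g))) :
    SameMonogenyClass R (ker (f'.coprod g')) V₂ := by
  refine ⟨⟨snd R V₁ V₂ ∘ₗ Submodule.subtype _, fun w₁ w₂ h => Subtype.ext (Prod.ext ?_ h)⟩,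
    ⟨Submodule.projectionOnto _ _ hc ∘ₗ inr R V₁ V₂,
      (injective_iff_map_eq_zero _).2 fun v hv => ?_⟩⟩
  · have h₁ := mem_ker.1 w₁.2
    have h₂ := mem_ker.1 w₂.2
    simp only [LinearMap.coprod_apply] at h₁ h₂
    simp only [LinearMap.comp_apply, Submodule.coe_subtype, LinearMap.snd_apply] at h
    exact hf' (add_right_cancel (h₁.trans (h ▸ h₂.symm)))
  · obtain ⟨x, hx⟩ := (Submodule.projectionOnto_apply_eq_zero_iff hc).1 hv
    have hfx : f x = 0 := congrArg Prod.fst hx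
    rw [← show g x = v from congrArg Prod.snd hx, hf (hfx.trans (map_zero f).symm), map_zero]

theorem sameEpigenyClass_ker_coprod (hg : Surjective g) (hg' : Surjective g')
    (hc : IsCompl (ker (f'.coprod g')) (range (f.prod g))) :
    SameEpigenyClass R (ker (f'.coprod g')) V₁ := by
  refine ⟨⟨fst R V₁ V₂ ∘ₗ Submodule.subtype _, fun v => ?_⟩,
    ⟨Submodule.projectionOnto _ _ hc ∘ₗ inl R V₁ V₂, fun w => ?_⟩⟩
  · obtain ⟨u, hu⟩ := hg' (-f' v)
    exact ⟨⟨(v, u), by simp [hu]⟩, rfl⟩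
  · obtain ⟨x, hx⟩ := hg (w : V₁ × V₂).2
    refine ⟨(w : V₁ × V₂).1 - f x, ?_⟩
    have : inl R V₁ V₂ ((w : V₁ × V₂).1 - f x) = w - f.prod g x := by ext <;> simp [hx]
    rw [LinearMap.comp_apply, this, map_sub, Submodule.projectionOnto_apply_left,
      (Submodule.projectionOnto_apply_eq_zero_iff hc).2 (mem_range_self _ x), sub_zero]

end KerCoprod

end LinearAlgebra

section Exchange

variable {R : Type u} [Ring R] {X : Type v} {Y : Type*} [AddCommGroup X] [Module R X]
  [AddCommGroup Y] [Module R Y] {κ : Type w}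

def piEquivProdOfOptionEquiv {κ' : Type*} (V : κ → ModuleCat.{v} R)
    (α : Option κ' ≃ κ) : (∀ l, V l) ≃ₗ[R] V (α none) × ∀ l', V (α (some l')) :=
  (LinearEquiv.piCongrLeft R (fun l => V l) α).symm ≪≫ₗ LinearEquiv.piOptionEquivProd R

variable {V : κ → ModuleCat.{v} R}

def toComponent (e : (X × Y) ≃ₗ[R] ∀ l, V l) (l : κ) : X →ₗ[R] V l :=
  proj l ∘ₗ e.toLinearMap ∘ₗ inl R X Y

def ofComponent [DecidableEq κ] (e : (X × Y) ≃ₗ[R] ∀ l, V l) (l : κ) : V l →ₗ[R] X :=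
  fst R X Y ∘ₗ e.symm.toLinearMap ∘ₗ single R (fun l => V l) l

theorem sum_ofComponent_comp_toComponent [Fintype κ] [DecidableEq κ]
    (e : (X × Y) ≃ₗ[R] ∀ l, V l) :
    ∑ l, ofComponent e l ∘ₗ toComponent e l = LinearMap.id := by
  ext x
  simp only [LinearMap.sum_apply, LinearMap.comp_apply, ofComponent, toComponent, ← map_sum,
    proj_apply, single_apply, Finset.univ_sum_single]
  exact congrArg Prod.fst (e.symm_apply_apply (x, 0))

/-- The outcome of exchanging `X` into `⨁ V`: the complement `Y` of `X` is `⨁ V'`, and the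
family `X, V'` (indexed by `Option κ'`) matches `V` up to monogeny along `α` and up to epigeny
along `β`. -/
def WeakExchange (X : Type v) (Y : Type*) [AddCommGroup X] [Module R X] [AddCommGroup Y]
    [Module R Y] (V : κ → ModuleCat.{v} R) : Prop :=
  ∃ (κ' : Type w) (V' : κ' → ModuleCat.{v} R), (∀ l, Nontrivial (V' l)) ∧
    (∀ l, IsUniserialModule R (V' l)) ∧ Nonempty (Y ≃ₗ[R] ∀ l, V' l) ∧
    (∃ α : Option κ' ≃ κ, ∀ o,
      SameMonogenyClass R (o.elim' (ModuleCat.of R X) V' : ModuleCat.{v} R) (V (α o))) ∧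
    ∃ β : Option κ' ≃ κ, ∀ o,
      SameEpigenyClass R (o.elim' (ModuleCat.of R X) V' : ModuleCat.{v} R) (V (β o))

variable [DecidableEq κ] [Nontrivial X]

theorem weakExchange_of_bijective (hVnt : ∀ l, Nontrivial (V l))
    (hVuni : ∀ l, IsUniserialModule R (V l)) (e : (X × Y) ≃ₗ[R] ∀ l, V l) {l : κ}
    (h : Bijective (ofComponent e l ∘ₗ toComponent e l)) :
    WeakExchange X Y V := by
  have hg : Bijective (ofComponent e l) :=
    ⟨(hVuni l).injective_of_injective_comp h.1, Surjective.of_comp (g := toComponent e l) h.2⟩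
  have hf : Bijective (toComponent e l) :=
    ⟨Injective.of_comp (f := ofComponent e l) h.1, (hVuni l).surjective_of_surjective_comp h.2⟩
  let α := Equiv.optionSubtypeNe l
  obtain ⟨eY⟩ := nonempty_linearEquiv_of_bijective_comp_inl (e ≪≫ₗ piEquivProdOfOptionEquiv V α)
    (LinearEquiv.refl R _) (ofComponent e l ∘ₗ fst R (V l) (∀ l' : {l' // l' ≠ l}, V l')) h hg
  refine ⟨{l' // l' ≠ l}, fun l' => V l', fun l' => hVnt l', fun l' => hVuni l', ⟨eY⟩,
    ⟨α, ?_⟩, ⟨α, ?_⟩⟩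
  · rintro (_ | l')
    exacts [⟨⟨_, hf.1⟩, ⟨_, hg.1⟩⟩, .refl _ _]
  · rintro (_ | l')
    exacts [⟨⟨_, hf.2⟩, ⟨_, hg.2⟩⟩, .refl _ _]

theorem weakExchange_of_ne (hVnt : ∀ l, Nontrivial (V l))
    (hVuni : ∀ l, IsUniserialModule R (V l)) (e : (X × Y) ≃ₗ[R] ∀ l, V l) {l₁ l₂ : κ}
    (hl : l₂ ≠ l₁)
    (h₁ : Injective (ofComponent e l₁ ∘ₗ toComponent e l₁))
    (h₂ : Surjective (ofComponent e l₂ ∘ₗ toComponent e l₂))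
    (h : Bijective
      (ofComponent e l₁ ∘ₗ toComponent e l₁ + ofComponent e l₂ ∘ₗ toComponent e l₂)) :
    WeakExchange X Y V := by
  set f := toComponent e l₁
  set f' := ofComponent e l₁
  set g := toComponent e l₂
  set g' := ofComponent e l₂
  have hf : Injective f := Injective.of_comp (f := f') h₁
  have hf' : Injective f' := (hVuni l₁).injective_of_injective_comp h₁
  have hg : Surjective g := (hVuni l₂).surjective_of_surjective_comp h₂
  have hg' : Surjective g' := Surjective.of_comp (g := g) h₂
  rw [← coprod_comp_prod] at h
  obtain ⟨ρ, hρ⟩ := exists_linearEquiv_prod_ker h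
  have hc := isCompl_ker_range_of_bijective_comp h
  have hWm := sameMonogenyClass_ker_coprod hf hf' hc
  have hWe := sameEpigenyClass_ker_coprod hg hg' hc
  -- `γ` enumerates `κ` as `l₁`, `l₂`, then the remaining indices.
  let γ := (Equiv.optionCongr (Equiv.optionSubtypeNe (⟨l₂, hl⟩ : {l // l ≠ l₁}))).trans
    (Equiv.optionSubtypeNe l₁)
  let Z := ∀ x : {x : {l // l ≠ l₁} // x ≠ ⟨l₂, hl⟩}, V x.1.1
  let D : (∀ l, V l) ≃ₗ[R] (V l₁ × V l₂) × Z := piEquivProdOfOptionEquiv V γ ≪≫ₗ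
    (LinearEquiv.refl R _).prodCongr (LinearEquiv.piOptionEquivProd R) ≪≫ₗ
    (LinearEquiv.prodAssoc R _ _ _).symm
  let E : (X × (ker (f'.coprod g') × Z)) ≃ₗ[R] (V l₁ × V l₂) × Z :=
    (LinearEquiv.prodAssoc R _ _ _).symm ≪≫ₗ ρ.prodCongr (LinearEquiv.refl R Z)
  obtain ⟨eY⟩ := nonempty_linearEquiv_of_bijective_comp_inl (e ≪≫ₗ D) E
    (f'.coprod g' ∘ₗ fst R _ Z) h
    (by convert h using 2; ext x; exact congrArg (f'.coprod g') (hρ x))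
  let V' : Option {x : {l // l ≠ l₁} // x ≠ ⟨l₂, hl⟩} → ModuleCat.{v} R :=
    fun o => o.elim' (ModuleCat.of R (ker (f'.coprod g'))) fun x => V x.1.1
  refine ⟨_, V', ?_, ?_, ⟨eY ≪≫ₗ (LinearEquiv.piOptionEquivProd R (M := fun o => V' o)).symm⟩,
    ⟨γ, ?_⟩, ⟨γ.trans (Equiv.swap l₁ l₂), ?_⟩⟩
  · rintro (_ | x)
    exacts [hWe.1.elim fun _ hp => hp.nontrivial, hVnt _]
  · rintro (_ | x)
    exacts [hWm.1.elim fun _ hm => (hVuni l₂).of_injective hm, hVuni _]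
  · rintro (_ | _ | x)
    exacts [⟨⟨f, hf⟩, ⟨f', hf'⟩⟩, hWm, .refl _ _]
  · rintro (_ | _ | x)
    · show SameEpigenyClass R X (V (Equiv.swap l₁ l₂ l₁))
      rw [Equiv.swap_apply_left]
      exact ⟨⟨g, hg⟩, ⟨g', hg'⟩⟩
    · show SameEpigenyClass R (ker (f'.coprod g')) (V (Equiv.swap l₁ l₂ l₂))
      rw [Equiv.swap_apply_right]
      exact hWe
    · show SameEpigenyClass R (V x) (V (Equiv.swap l₁ l₂ x))
      rw [Equiv.swap_apply_of_ne_of_ne x.1.2 fun hx => x.2 (Subtype.ext hx)]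
      exact .refl _ _

theorem weakExchange [Fintype κ] (hX : IsUniserialModule R X) (hVnt : ∀ l, Nontrivial (V l))
    (hVuni : ∀ l, IsUniserialModule R (V l)) (e : (X × Y) ≃ₗ[R] ∀ l, V l) :
    WeakExchange X Y V := by
  have hsum := sum_ofComponent_comp_toComponent e
  by_cases hbij : ∃ l, Bijective (ofComponent e l ∘ₗ toComponent e l)
  · obtain ⟨l, hl⟩ := hbij
    exact weakExchange_of_bijective hVnt hVuni e hl
  simp only [not_exists] at hbij
  obtain ⟨l₁, -, h₁⟩ := hX.exists_injective_of_injective_sum Finset.univ _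
    (by rw [hsum]; exact injective_id)
  obtain ⟨l₂, -, h₂⟩ := hX.exists_surjective_of_surjective_sum Finset.univ _
    (by rw [hsum]; exact surjective_id)
  have h₁' : ¬Surjective (ofComponent e l₁ ∘ₗ toComponent e l₁) := fun hs => hbij l₁ ⟨h₁, hs⟩
  have h₂' : ¬Injective (ofComponent e l₂ ∘ₗ toComponent e l₂) := fun hi => hbij l₂ ⟨hi, h₂⟩
  exact weakExchange_of_ne hVnt hVuni e (fun hl : l₂ = l₁ => h₂' (hl ▸ h₁)) h₁ h₂
    (hX.bijective_add hX h₁ h₁' h₂ h₂')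

end Exchange

theorem IsUniserialModule.exists_equiv_sameMonogenyClass_sameEpigenyClass
    {R : Type u} [Ring R] {ι κ : Type w} [Finite ι] [Finite κ]
    (U : ι → ModuleCat.{v} R) (V : κ → ModuleCat.{v} R)
    (hUnt : ∀ k, Nontrivial (U k)) (hUuni : ∀ k, IsUniserialModule R (U k))
    (hVnt : ∀ l, Nontrivial (V l)) (hVuni : ∀ l, IsUniserialModule R (V l))
    (e : (∀ k, U k) ≃ₗ[R] ∀ l, V l) :
    (∃ σ : ι ≃ κ, ∀ k, SameMonogenyClass R (U k) (V (σ k))) ∧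
      ∃ τ : ι ≃ κ, ∀ k, SameEpigenyClass R (U k) (V (τ k)) := by
  induction ι using Finite.induction_empty_option generalizing κ with
  | of_equiv ε ih =>
    obtain ⟨⟨σ, hσ⟩, τ, hτ⟩ := ih (fun k => U (ε k)) V (fun k => hUnt _) (fun k => hUuni _) hVnt
      hVuni (LinearEquiv.piCongrLeft R (fun k => U k) ε ≪≫ₗ e)
    refine ⟨⟨ε.symm.trans σ, fun k => ?_⟩, ε.symm.trans τ, fun k => ?_⟩ <;>
      obtain ⟨k, rfl⟩ := ε.surjective k <;>
      rw [Equiv.trans_apply, ε.symm_apply_apply]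
    exacts [hσ k, hτ k]
  | h_empty =>
    have : IsEmpty κ := ⟨fun l =>
      have := Pi.nontrivial_at (f := fun l => V l) l
      not_subsingleton (∀ l, V l) e.symm.toEquiv.subsingleton⟩
    exact ⟨⟨Equiv.equivOfIsEmpty _ _, isEmptyElim⟩, Equiv.equivOfIsEmpty _ _, isEmptyElim⟩
  | @h_option ι _ ih =>
    have := Fintype.ofFinite κ
    classical
    obtain ⟨κ', V', hV'nt, hV'uni, ⟨eY⟩, ⟨α, hα⟩, β, hβ⟩ :=
      weakExchange (hUuni none) hVnt hVuni
        ((LinearEquiv.piOptionEquivProd R (M := fun k => U k)).symm ≪≫ₗ e)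
    have : Finite κ' := Finite.of_injective (α ∘ some) (α.injective.comp (Option.some_injective _))
    obtain ⟨⟨σ, hσ⟩, τ, hτ⟩ := ih (fun k => U (some k)) V' (fun k => hUnt _) (fun k => hUuni _)
      hV'nt hV'uni eY
    refine ⟨⟨σ.optionCongr.trans α, ?_⟩, τ.optionCongr.trans β, ?_⟩ <;> rintro (_ | k)
    exacts [hα none, (hσ k).trans (hα (some (σ k))), hβ none, (hτ k).trans (hβ (some (τ k)))]

/-- Weak Krull–Schmidt for uniserial modules: if `U₁ ⊕ ... ⊕ U_r ≅ V₁ ⊕ ... ⊕ V_s`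
with all `U_k`, `V_l` non-zero uniserial, then `r = s` and there are two permutations
`σ`, `τ` with `[U_k]_m = [V_{σ k}]_m` and `[U_k]_e = [V_{τ k}]_e` for every `k`. -/
theorem weak_krull_schmidt_uniserial
    {R : Type u} [Ring R] {r s : ℕ}
    (U : Fin r → Type u) [∀ k, AddCommGroup (U k)] [∀ k, Module R (U k)]
    (V : Fin s → Type u) [∀ l, AddCommGroup (V l)] [∀ l, Module R (V l)]
    (hUnz : ∀ k, Nontrivial (U k)) (hUuni : ∀ k, IsUniserialModule R (U k))
    (hVnz : ∀ l, Nontrivial (V l)) (hVuni : ∀ l, IsUniserialModule R (V l))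
    (e : (∀ k, U k) ≃ₗ[R] ∀ l, V l) :
    r = s ∧
    (∃ σ : Fin r ≃ Fin s, ∀ k,
      (∃ f : U k →ₗ[R] V (σ k), Function.Injective f) ∧
      (∃ g : V (σ k) →ₗ[R] U k, Function.Injective g)) ∧
    (∃ τ : Fin r ≃ Fin s, ∀ k,
      (∃ f : U k →ₗ[R] V (τ k), Function.Surjective f) ∧
      (∃ g : V (τ k) →ₗ[R] U k, Function.Surjective g)) := by
  obtain ⟨⟨σ, hσ⟩, τ, hτ⟩ := IsUniserialModule.exists_equiv_sameMonogenyClass_sameEpigenyClass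
    (fun k => ModuleCat.of R (U k)) (fun l => ModuleCat.of R (V l)) hUnz hUuni hVnz hVuni e
  exact ⟨Fin.equiv_iff_eq.1 ⟨σ⟩, ⟨σ, hσ⟩, τ, hτ⟩
end
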